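/- arXiv:2010.12187 — 7 statements merged into one kernel-verified Lean document; each statement's English description precedes it below -/
import Mathlib

section
/- Let m ≥ 1, h > 0, and let A, C, F, D be m×m real matrices such that I_m + hF is invertible. Define the 2m×2m real matrix S in m×m blocks by S = [[(I_m+hF)⁻¹, −h(I_m+hF)⁻¹D], [hA(I_m+hF)⁻¹, −h²A(I_m+hF)⁻¹D + I_m + hC]]. Then S is symplectic if and only if Aᵀ = A, F = Cᵀ and Dᵀ = D. -/
open Matrix

/-- The standard symplectic matrix `J = [[0, -I_m],[I_m, 0]]` in `m × m` blocks. -/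
def Jmat (m : ℕ) : Matrix (Fin m ⊕ Fin m) (Fin m ⊕ Fin m) ℝ :=
  Matrix.fromBlocks 0 (-1) 1 0

/-- A `2m × 2m` real matrix `M` is symplectic iff `Mᵀ * J * M = J`. -/
def IsSymplectic {m : ℕ} (M : Matrix (Fin m ⊕ Fin m) (Fin m ⊕ Fin m) ℝ) : Prop :=
  Mᵀ * Jmat m * M = Jmat m

lemma key (m : ℕ) (h : ℝ) (hh : h ≠ 0)
    (A C F D G : Matrix (Fin m) (Fin m) ℝ)
    (hGN : G * (1 + h • F) = 1) (hNG : (1 + h • F) * G = 1) :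
    IsSymplectic
      (Matrix.fromBlocks G (-(h • (G * D)))
        (h • (A * G)) (-((h ^ 2) • (A * G * D)) + 1 + h • C))
      ↔ (Aᵀ = A ∧ F = Cᵀ ∧ Dᵀ = D) := by
  have t1 : (1 + h • F)ᵀ * Gᵀ = 1 := by
    rw [← Matrix.transpose_mul, hGN, Matrix.transpose_one]
  have t2 : Gᵀ * (1 + h • F)ᵀ = 1 := by
    rw [← Matrix.transpose_mul, hNG, Matrix.transpose_one]
  have sand : ∀ X : Matrix (Fin m) (Fin m) ℝ,
      X = (1 + h • F)ᵀ * (Gᵀ * X * G) * (1 + h • F) := by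
    intro X
    calc X = ((1 + h • F)ᵀ * Gᵀ) * X * (G * (1 + h • F)) := by
            rw [t1, hGN, Matrix.one_mul, Matrix.mul_one]
      _ = (1 + h • F)ᵀ * (Gᵀ * X * G) * (1 + h • F) := by (noncomm_ring; try module)
  unfold IsSymplectic Jmat
  rw [Matrix.fromBlocks_transpose, Matrix.fromBlocks_multiply, Matrix.fromBlocks_multiply,
    Matrix.fromBlocks_inj]
  simp only [Matrix.transpose_smul, Matrix.transpose_mul, Matrix.transpose_neg,
    Matrix.transpose_add, Matrix.transpose_one, Matrix.transpose_transpose,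
    Matrix.zero_mul, Matrix.mul_zero, zero_add, add_zero, Matrix.mul_one,
    Matrix.mul_neg, Matrix.neg_mul, Matrix.one_mul]
  constructor
  · rintro ⟨h1, h2, h3, h4⟩
    -- step 1 : Aᵀ = A
    have e1 : Gᵀ * (h • (Aᵀ - A)) * G = 0 := by rw [← h1]; (noncomm_ring; try module)
    have e1' : h • (Aᵀ - A) = 0 := by
      have := sand (h • (Aᵀ - A))
      rw [e1, Matrix.mul_zero, Matrix.zero_mul] at this
      exact this
    have hA : Aᵀ = A := by
      rcases smul_eq_zero.mp e1' with hc | hc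
      · exact absurd hc hh
      · exact sub_eq_zero.mp hc
    refine ⟨hA, ?_, ?_⟩
    · -- step 2 : F = Cᵀ
      rw [hA] at h2
      have e2 : -(Gᵀ * (1 + h • C)) = -1 := by rw [← h2]; (noncomm_ring; try module)
      have e2' : (1 : Matrix (Fin m) (Fin m) ℝ) + h • C = (1 + h • F)ᵀ := by
        calc (1 : Matrix (Fin m) (Fin m) ℝ) + h • C
            = ((1 + h • F)ᵀ * Gᵀ) * (1 + h • C) := by rw [t1, Matrix.one_mul]
          _ = (1 + h • F)ᵀ * (Gᵀ * (1 + h • C)) := by rw [Matrix.mul_assoc]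
          _ = (1 + h • F)ᵀ * 1 := by rw [neg_inj.mp e2]
          _ = (1 + h • F)ᵀ := Matrix.mul_one _
      rw [Matrix.transpose_add, Matrix.transpose_one, Matrix.transpose_smul] at e2'
      have : h • C = h • Fᵀ := by
        have := add_left_cancel e2'
        exact this
      have hC : C = Fᵀ := smul_right_injective _ hh this
      rw [hC, Matrix.transpose_transpose]
    · -- step 3 : Dᵀ = D
      rw [hA] at h2 h4
      have e2 : -(Gᵀ * (1 + h • C)) = -1 := by rw [← h2]; (noncomm_ring; try module)
      have e2' : (1 : Matrix (Fin m) (Fin m) ℝ) + h • C = (1 + h • F)ᵀ := by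
        calc (1 : Matrix (Fin m) (Fin m) ℝ) + h • C
            = ((1 + h • F)ᵀ * Gᵀ) * (1 + h • C) := by rw [t1, Matrix.one_mul]
          _ = (1 + h • F)ᵀ * (Gᵀ * (1 + h • C)) := by rw [Matrix.mul_assoc]
          _ = (1 + h • F)ᵀ * 1 := by rw [neg_inj.mp e2]
          _ = (1 + h • F)ᵀ := Matrix.mul_one _
      rw [Matrix.transpose_add, Matrix.transpose_one, Matrix.transpose_smul] at e2'
      have hC : C = Fᵀ := smul_right_injective _ hh (add_left_cancel e2')
      subst hC
      rw [Matrix.transpose_transpose] at h4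
      have t4 : Gᵀ * (1 + h • Fᵀ) = 1 := by
        have := t2
        rwa [Matrix.transpose_add, Matrix.transpose_one, Matrix.transpose_smul] at this
      have e4 : h • Dᵀ - h • D = 0 := by
        rw [← h4]
        calc h • Dᵀ - h • D
            = (h ^ 3) • (Dᵀ * Gᵀ * (A * (G * D))) - h • (((1 + h • F) * G) * D)
              - ((h ^ 3) • (Dᵀ * Gᵀ * (A * (G * D))) - h • (Dᵀ * (Gᵀ * (1 + h • Fᵀ)))) := by
              rw [hNG, t4]; (noncomm_ring; try module)
          _ = _ := by (noncomm_ring; try module)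
      have e4' : h • (Dᵀ - D) = 0 := by rw [smul_sub]; exact e4
      rcases smul_eq_zero.mp e4' with hc | hc
      · exact absurd hc hh
      · exact sub_eq_zero.mp hc
  · rintro ⟨hA, hF', hD⟩
    subst hF'
    have u : Gᵀ * (1 + h • C) = 1 := by
      have := congrArg Matrix.transpose hNG
      rwa [Matrix.transpose_mul, Matrix.transpose_add, Matrix.transpose_one,
        Matrix.transpose_smul, Matrix.transpose_transpose] at this
    refine ⟨?_, ?_, ?_, ?_⟩
    · rw [hA]; (noncomm_ring; try module)
    · rw [hA]
      have step : -(Gᵀ * (1 + h • C)) = (-1 : Matrix (Fin m) (Fin m) ℝ) := by rw [u]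
      rw [← step]; (noncomm_ring; try module)
    · rw [hA]
      conv_rhs => rw [← hNG]
      (noncomm_ring; try module)
    · rw [hA, hD]
      trans (h • (D * (Gᵀ * (1 + h • C))) - h • (((1 + h • Cᵀ) * G) * D))
      · (noncomm_ring; try module)
      · rw [u, hNG]; (noncomm_ring; try module)

/-- the block matrix
`S = [[(I+hF)⁻¹, −h(I+hF)⁻¹D], [hA(I+hF)⁻¹, −h²A(I+hF)⁻¹D + I + hC]]`
is symplectic iff `Aᵀ = A`, `F = Cᵀ` and `Dᵀ = D`. -/
theorem stmt0 (m : ℕ) (hm : 1 ≤ m) (h : ℝ) (hh : 0 < h)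
    (A C F D : Matrix (Fin m) (Fin m) ℝ) (hF : IsUnit (1 + h • F)) :
    IsSymplectic
      (Matrix.fromBlocks (1 + h • F)⁻¹ (-(h • ((1 + h • F)⁻¹ * D)))
        (h • (A * (1 + h • F)⁻¹)) (-((h ^ 2) • (A * (1 + h • F)⁻¹ * D)) + 1 + h • C))
      ↔ (Aᵀ = A ∧ F = Cᵀ ∧ Dᵀ = D) := by
  have hd : IsUnit (1 + h • F).det := (Matrix.isUnit_iff_isUnit_det _).mp hF
  exact key m h (ne_of_gt hh) A C F D _ (Matrix.nonsing_inv_mul _ hd) (Matrix.mul_nonsing_inv _ hd)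
end

section
/- Let m ≥ 1, h > 0, and let X be a 2m×2m real symplectic matrix, written in m×m blocks as X = [[X₁₁, X₁₂],[X₂₁, X₂₂]], such that X₁₁ is invertible. Define C̃ = h⁻¹(X₁₁⁻¹ − I_m)ᵀ, Ã = h⁻¹X₂₁X₁₁⁻¹ and D̃ = −h⁻¹X₁₁⁻¹X₁₂. Then Ãᵀ = Ã, D̃ᵀ = D̃, I_m + hC̃ᵀ = X₁₁⁻¹ (in particular I_m + hC̃ᵀ is invertible), and X = S_h(Ã, C̃, D̃); in particular X₂₂ = −h²Ã(I_m + hC̃ᵀ)⁻¹D̃ + I_m + hC̃. -/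
open Matrix

/-- The matrix `S_h(A,C,D)` with blocks
`[[(I+hCᵀ)⁻¹, −h(I+hCᵀ)⁻¹D],[hA(I+hCᵀ)⁻¹, −h²A(I+hCᵀ)⁻¹D + I + hC]]`. -/
noncomputable def Sh (m : ℕ) (h : ℝ) (A C D : Matrix (Fin m) (Fin m) ℝ) :
    Matrix (Fin m ⊕ Fin m) (Fin m ⊕ Fin m) ℝ :=
  Matrix.fromBlocks (1 + h • Cᵀ)⁻¹ (-(h • ((1 + h • Cᵀ)⁻¹ * D)))
    (h • (A * (1 + h • Cᵀ)⁻¹)) (-((h ^ 2) • (A * (1 + h • Cᵀ)⁻¹ * D)) + 1 + h • C)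

/-! Written in blocks, `XᵀJX = J` says that `X₁₁ᵀX₂₁` and `X₁₂ᵀX₂₂` are symmetric and that
`X₁₁ᵀX₂₂ − X₂₁ᵀX₁₂ = I`. When `X₁₁` is invertible, multiplying by `X₁₁⁻¹` and its transpose turns
these into the symmetry of `X₂₁X₁₁⁻¹` and of `X₁₁⁻¹X₁₂` and into `X₂₂ = X₂₁X₁₁⁻¹X₁₂ + X₁₁⁻ᵀ`,
which is the lower-right block of `S_h(Ã, C̃, D̃)`; the other three blocks match by construction. -/

namespace Matrix

theorem isSymm_transpose_mul_iff {n α : Type*} [Fintype n] [CommSemiring α]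
    (A C : Matrix n n α) : (Aᵀ * C).IsSymm ↔ Cᵀ * A = Aᵀ * C := by
  rw [IsSymm, transpose_mul, transpose_transpose]

theorem one_add_smul_transpose_inv_smul_transpose_sub_one {n K : Type*} [DecidableEq n] [Field K]
    {h : K} (hh : h ≠ 0) (M : Matrix n n K) : 1 + h • (h⁻¹ • (M - 1)ᵀ)ᵀ = M := by
  rw [transpose_smul, transpose_transpose, smul_smul, mul_inv_cancel₀ hh, one_smul,
    add_sub_cancel]

variable {n α : Type*} [Fintype n] [DecidableEq n] [CommRing α] {A B C D : Matrix n n α}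

theorem isSymm_mul_nonsing_inv_of_isSymm_transpose_mul (hA : IsUnit A) (hAC : (Aᵀ * C).IsSymm) :
    (C * A⁻¹).IsSymm := by
  have hdet : IsUnit A.det := (isUnit_iff_isUnit_det A).mp hA
  have hdetT : IsUnit Aᵀ.det := by rwa [det_transpose]
  calc (C * A⁻¹)ᵀ = Aᵀ⁻¹ * (Cᵀ * A) * A⁻¹ := by
        rw [transpose_mul, transpose_nonsing_inv, mul_assoc, mul_nonsing_inv_cancel_right _ _ hdet]
    _ = C * A⁻¹ := by
        rw [(isSymm_transpose_mul_iff A C).mp hAC, nonsing_inv_mul_cancel_left _ _ hdetT]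

theorem eq_mul_nonsing_inv_mul_add_of_transpose_mul_sub_eq_one (hA : IsUnit A)
    (hAC : (Aᵀ * C).IsSymm) (hAD : Aᵀ * D - Cᵀ * B = 1) : D = C * A⁻¹ * B + A⁻¹ᵀ := by
  have hdetT : IsUnit Aᵀ.det := by rwa [det_transpose, ← isUnit_iff_isUnit_det]
  calc D = Aᵀ⁻¹ * (Aᵀ * D) := (nonsing_inv_mul_cancel_left _ _ hdetT).symm
    _ = (C * A⁻¹)ᵀ * B + A⁻¹ᵀ := by
      rw [sub_eq_iff_eq_add'.mp hAD, mul_add, mul_one, ← mul_assoc, transpose_mul,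
        transpose_nonsing_inv]
    _ = C * A⁻¹ * B + A⁻¹ᵀ := by rw [(isSymm_mul_nonsing_inv_of_isSymm_transpose_mul hA hAC).eq]

theorem isSymm_nonsing_inv_mul_of_isSymm_transpose_mul (hA : IsUnit A)
    (hAC : (Aᵀ * C).IsSymm) (hAD : Aᵀ * D - Cᵀ * B = 1) (hBD : (Bᵀ * D).IsSymm) :
    (A⁻¹ * B).IsSymm := by
  have hBD' := (isSymm_transpose_mul_iff B D).mp hBD
  rw [eq_mul_nonsing_inv_mul_add_of_transpose_mul_sub_eq_one hA hAC hAD, transpose_add,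
    transpose_mul (C * A⁻¹), (isSymm_mul_nonsing_inv_of_isSymm_transpose_mul hA hAC).eq,
    transpose_transpose] at hBD'
  rw [IsSymm, transpose_mul]
  linear_combination (norm := noncomm_ring) -hBD'

end Matrix

open Matrix

theorem isSymplectic_fromBlocks_iff {m : ℕ} {A B C D : Matrix (Fin m) (Fin m) ℝ} :
    IsSymplectic (fromBlocks A B C D) ↔
      (Aᵀ * C).IsSymm ∧ Aᵀ * D - Cᵀ * B = 1 ∧ (Bᵀ * D).IsSymm := by
  unfold IsSymplectic Jmat
  rw [fromBlocks_transpose, fromBlocks_multiply, fromBlocks_multiply, fromBlocks_inj,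
    isSymm_transpose_mul_iff, isSymm_transpose_mul_iff]
  simp only [mul_zero, mul_one, zero_add, mul_neg, add_zero, neg_mul, ← sub_eq_add_neg,
    sub_eq_zero]
  have hDA : (Aᵀ * D - Cᵀ * B)ᵀ = Dᵀ * A - Bᵀ * C := by
    rw [transpose_sub, transpose_mul, transpose_mul, transpose_transpose, transpose_transpose]
  constructor
  · rintro ⟨hAC, hAD, -, hBD⟩
    exact ⟨hAC, by rw [← neg_sub, hAD, neg_neg], hBD⟩
  · rintro ⟨hAC, hAD, hBD⟩
    exact ⟨hAC, by rw [← neg_sub, hAD], by rw [← hDA, hAD, transpose_one], hBD⟩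

theorem Sh_eq_fromBlocks {m : ℕ} {h : ℝ} (hh : h ≠ 0) {A B C : Matrix (Fin m) (Fin m) ℝ}
    (hA : IsUnit A) :
    Sh m h (h⁻¹ • (C * A⁻¹)) (h⁻¹ • (A⁻¹ - 1)ᵀ) (-(h⁻¹ • (A⁻¹ * B))) =
      fromBlocks A B C (C * A⁻¹ * B + A⁻¹ᵀ) := by
  have hdet : IsUnit A.det := (isUnit_iff_isUnit_det A).mp hA
  unfold Sh
  rw [one_add_smul_transpose_inv_smul_transpose_sub_one hh, nonsing_inv_nonsing_inv _ hdet]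
  congr 1
  · rw [mul_neg, smul_neg, neg_neg, mul_smul_comm, smul_smul, mul_inv_cancel₀ hh, one_smul,
      mul_nonsing_inv_cancel_left _ _ hdet]
  · rw [smul_mul_assoc, smul_smul, mul_inv_cancel₀ hh, one_smul,
      nonsing_inv_mul_cancel_right _ _ hdet]
  · have hsq : h ^ 2 * (h⁻¹ * h⁻¹) = 1 := by field_simp
    simp [smul_smul, hh, hsq, mul_assoc, nonsing_inv_mul_cancel_left _ _ hdet]

theorem stmt1_general (m : ℕ) (h : ℝ) (hh : 0 < h)
    (X11 X12 X21 X22 : Matrix (Fin m) (Fin m) ℝ)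
    (hsymp : IsSymplectic (Matrix.fromBlocks X11 X12 X21 X22))
    (hX11 : IsUnit X11)
    (Atil Ctil Dtil : Matrix (Fin m) (Fin m) ℝ)
    (hCtil : Ctil = h⁻¹ • (X11⁻¹ - 1)ᵀ)
    (hAtil : Atil = h⁻¹ • (X21 * X11⁻¹))
    (hDtil : Dtil = -(h⁻¹ • (X11⁻¹ * X12))) :
    Atilᵀ = Atil ∧ Dtilᵀ = Dtil ∧
    (1 + h • Ctilᵀ = X11⁻¹ ∧ IsUnit (1 + h • Ctilᵀ)) ∧
    Matrix.fromBlocks X11 X12 X21 X22 = Sh m h Atil Ctil Dtil ∧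
    X22 = -((h ^ 2) • (Atil * (1 + h • Ctilᵀ)⁻¹ * Dtil)) + 1 + h • Ctil := by
  subst hCtil hAtil hDtil
  obtain ⟨hX11X21, hX22, hX12X22⟩ := isSymplectic_fromBlocks_iff.mp hsymp
  have hC := one_add_smul_transpose_inv_smul_transpose_sub_one hh.ne' X11⁻¹
  have hX : fromBlocks X11 X12 X21 X22 =
      Sh m h (h⁻¹ • (X21 * X11⁻¹)) (h⁻¹ • (X11⁻¹ - 1)ᵀ) (-(h⁻¹ • (X11⁻¹ * X12))) := by
    rw [Sh_eq_fromBlocks hh.ne' hX11,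
      ← eq_mul_nonsing_inv_mul_add_of_transpose_mul_sub_eq_one hX11 hX11X21 hX22]
  refine ⟨?_, ?_, ⟨hC, by rw [hC]; exact isUnit_nonsing_inv_iff.mpr hX11⟩, hX, ?_⟩
  · rw [transpose_smul, (isSymm_mul_nonsing_inv_of_isSymm_transpose_mul hX11 hX11X21).eq]
  · rw [transpose_neg, transpose_smul,
      (isSymm_nonsing_inv_mul_of_isSymm_transpose_mul hX11 hX11X21 hX22 hX12X22).eq]
  · simpa [Sh] using congrArg toBlocks₂₂ hX

/-- any symplectic matrix `X` with invertible upper-left block is of the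
form `S_h(Ã, C̃, D̃)` with `Ã, D̃` symmetric. -/
theorem stmt1 (m : ℕ) (hm : 1 ≤ m) (h : ℝ) (hh : 0 < h)
    (X11 X12 X21 X22 : Matrix (Fin m) (Fin m) ℝ)
    (hsymp : IsSymplectic (Matrix.fromBlocks X11 X12 X21 X22))
    (hX11 : IsUnit X11)
    (Atil Ctil Dtil : Matrix (Fin m) (Fin m) ℝ)
    (hCtil : Ctil = h⁻¹ • (X11⁻¹ - 1)ᵀ)
    (hAtil : Atil = h⁻¹ • (X21 * X11⁻¹))
    (hDtil : Dtil = -(h⁻¹ • (X11⁻¹ * X12))) :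
    Atilᵀ = Atil ∧ Dtilᵀ = Dtil ∧
    (1 + h • Ctilᵀ = X11⁻¹ ∧ IsUnit (1 + h • Ctilᵀ)) ∧
    Matrix.fromBlocks X11 X12 X21 X22 = Sh m h Atil Ctil Dtil ∧
    X22 = -((h ^ 2) • (Atil * (1 + h • Ctilᵀ)⁻¹ * Dtil)) + 1 + h • Ctil :=
  stmt1_general m h hh X11 X12 X21 X22 hsymp hX11 Atil Ctil Dtil hCtil hAtil hDtil
end

section
/- Let m ≥ 1, h > 0, and let A, C, D be m×m real matrices with Aᵀ = A and Dᵀ = D, and suppose I_m + shCᵀ is invertible for every s ∈ [0,1]. For s ∈ [0,1] define S_{s,h} = [[(I_m+shCᵀ)⁻¹, −sh(I_m+shCᵀ)⁻¹D],[shA(I_m+shCᵀ)⁻¹, −s²h²A(I_m+shCᵀ)⁻¹D + I_m + shC]]. Then S_{s,h} is symplectic for every s ∈ [0,1], the map s ↦ S_{s,h} is continuous, S_{0,h} = I_{2m}, and S_{1,h} = S_h(A,C,D); thus s ↦ S_{s,h} is a continuous path of symplectic matrices joining the identity to S_h(A,C,D). -/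
/-!
Writing `X = I + hCᵀ`, the matrix `S_h(A,C,D)` factors as
`[[I, 0], [hA, I]] * [[X⁻¹, 0], [0, Xᵀ]] * [[I, -hD], [0, I]]`: two shears with symmetric
off-diagonal blocks around a block diagonal matrix of the form `diag(X⁻¹, Xᵀ)`. Each factor is
symplectic, hence so is the product. Along the path, `S_{s,h} = S_{sh}(A,C,D)` depends
continuously on `s` because matrix inversion is continuous on invertible matrices.
-/

open Matrix

section SymplecticFactors

variable {l R : Type*} [Fintype l] [DecidableEq l] [CommRing R]

theorem fromBlocks_one_zero_mem_symplecticGroup {P : Matrix l l R} (hP : Pᵀ = P) :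
    fromBlocks 1 0 P 1 ∈ symplecticGroup l R := by
  simp [SymplecticGroup.fromBlocks_mem_iff, hP]

theorem fromBlocks_zero_one_mem_symplecticGroup {Q : Matrix l l R} (hQ : Qᵀ = Q) :
    fromBlocks 1 Q 0 1 ∈ symplecticGroup l R := by
  simp [SymplecticGroup.fromBlocks_mem_iff, hQ]

theorem fromBlocks_inv_transpose_mem_symplecticGroup {X : Matrix l l R} (hX : IsUnit X) :
    fromBlocks X⁻¹ 0 0 Xᵀ ∈ symplecticGroup l R := by
  have hXX : X * X⁻¹ = 1 := mul_nonsing_inv X ((isUnit_iff_isUnit_det X).mp hX)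
  simp [SymplecticGroup.fromBlocks_mem_iff, ← transpose_mul, hXX]

end SymplecticFactors

theorem fromBlocks_shear_mul_diag_mul_shear {l R : Type*} [Fintype l] [DecidableEq l]
    [CommRing R] (P B Y Q : Matrix l l R) :
    fromBlocks 1 0 P 1 * fromBlocks B 0 0 Y * fromBlocks 1 Q 0 1 =
      fromBlocks B (B * Q) (P * B) (P * B * Q + Y) := by
  simp [fromBlocks_multiply]

theorem isSymplectic_iff_mem_symplecticGroup {m : ℕ}
    {M : Matrix (Fin m ⊕ Fin m) (Fin m ⊕ Fin m) ℝ} :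
    IsSymplectic M ↔ M ∈ symplecticGroup (Fin m) ℝ :=
  SymplecticGroup.mem_iff'.symm

theorem Sh_eq_mul {m : ℕ} (t : ℝ) (A C D : Matrix (Fin m) (Fin m) ℝ) :
    Sh m t A C D = fromBlocks 1 0 (t • A) 1 *
      fromBlocks (1 + t • Cᵀ)⁻¹ 0 0 (1 + t • Cᵀ)ᵀ * fromBlocks 1 (-(t • D)) 0 1 := by
  rw [fromBlocks_shear_mul_diag_mul_shear, Sh]
  congr 1 <;> simp [transpose_add, add_assoc, pow_two, smul_smul, mul_assoc]

theorem isSymplectic_Sh {m : ℕ} {t : ℝ} {A C D : Matrix (Fin m) (Fin m) ℝ}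
    (hA : Aᵀ = A) (hD : Dᵀ = D) (hu : IsUnit (1 + t • Cᵀ)) :
    IsSymplectic (Sh m t A C D) := by
  rw [isSymplectic_iff_mem_symplecticGroup, Sh_eq_mul]
  refine mul_mem (mul_mem ?_ (fromBlocks_inv_transpose_mem_symplecticGroup hu)) ?_
  · exact fromBlocks_one_zero_mem_symplecticGroup (by rw [transpose_smul, hA])
  · exact fromBlocks_zero_one_mem_symplecticGroup (by rw [transpose_neg, transpose_smul, hD])

theorem Sh_zero (m : ℕ) (A C D : Matrix (Fin m) (Fin m) ℝ) : Sh m 0 A C D = 1 := by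
  simp [Sh]

theorem ContinuousOn.matrix_inv {X n 𝕜 : Type*} [TopologicalSpace X] [Fintype n]
    [DecidableEq n] [Field 𝕜] [TopologicalSpace 𝕜] [IsTopologicalDivisionRing 𝕜]
    {F : X → Matrix n n 𝕜} {s : Set X} (hF : ContinuousOn F s) (hu : ∀ x ∈ s, IsUnit (F x)) :
    ContinuousOn (fun x => (F x)⁻¹) s := fun x hx =>
  (continuousAt_matrix_inv (F x) (by
    simpa only [Ring.inverse_eq_inv'] using
      continuousAt_inv₀ ((isUnit_iff_isUnit_det _).mp (hu x hx)).ne_zero)).comp_continuousWithinAt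
    (hF x hx)

theorem continuousOn_Sh {m : ℕ} (A C D : Matrix (Fin m) (Fin m) ℝ) :
    ContinuousOn (fun t => Sh m t A C D) {t | IsUnit (1 + t • Cᵀ)} := by
  have hinv : ContinuousOn (fun t : ℝ => (1 + t • Cᵀ)⁻¹) {t | IsUnit (1 + t • Cᵀ)} :=
    ContinuousOn.matrix_inv (by fun_prop) fun _ ht => ht
  unfold Sh
  fun_prop

theorem stmt2_general (m : ℕ) (h : ℝ)
    (A C D : Matrix (Fin m) (Fin m) ℝ) (hA : Aᵀ = A) (hD : Dᵀ = D)
    (hinv : ∀ s ∈ Set.Icc (0 : ℝ) 1, IsUnit (1 + (s * h) • Cᵀ))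
    (S : ℝ → Matrix (Fin m ⊕ Fin m) (Fin m ⊕ Fin m) ℝ)
    (hS : ∀ s : ℝ, S s =
      Matrix.fromBlocks (1 + (s * h) • Cᵀ)⁻¹ (-((s * h) • ((1 + (s * h) • Cᵀ)⁻¹ * D)))
        ((s * h) • (A * (1 + (s * h) • Cᵀ)⁻¹))
        (-((s ^ 2 * h ^ 2) • (A * (1 + (s * h) • Cᵀ)⁻¹ * D)) + 1 + (s * h) • C)) :
    (∀ s ∈ Set.Icc (0 : ℝ) 1, IsSymplectic (S s)) ∧
    ContinuousOn S (Set.Icc (0 : ℝ) 1) ∧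
    S 0 = 1 ∧ S 1 = Sh m h A C D := by
  have hS_eq : S = fun s => Sh m (s * h) A C D := funext fun s => by rw [hS, Sh, mul_pow]
  subst hS_eq
  refine ⟨fun s hs => isSymplectic_Sh hA hD (hinv s hs), ?_, ?_, ?_⟩
  · exact (continuousOn_Sh A C D).comp (by fun_prop) hinv
  · simp only [zero_mul, Sh_zero]
  · simp only [one_mul]

/-- the path `s ↦ S_{s,h}` is a continuous path of symplectic matrices
joining the identity to `S_h(A,C,D)`. -/
theorem stmt2 (m : ℕ) (hm : 1 ≤ m) (h : ℝ) (hh : 0 < h)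
    (A C D : Matrix (Fin m) (Fin m) ℝ) (hA : Aᵀ = A) (hD : Dᵀ = D)
    (hinv : ∀ s ∈ Set.Icc (0 : ℝ) 1, IsUnit (1 + (s * h) • Cᵀ))
    (S : ℝ → Matrix (Fin m ⊕ Fin m) (Fin m ⊕ Fin m) ℝ)
    (hS : ∀ s : ℝ, S s =
      Matrix.fromBlocks (1 + (s * h) • Cᵀ)⁻¹ (-((s * h) • ((1 + (s * h) • Cᵀ)⁻¹ * D)))
        ((s * h) • (A * (1 + (s * h) • Cᵀ)⁻¹))
        (-((s ^ 2 * h ^ 2) • (A * (1 + (s * h) • Cᵀ)⁻¹ * D)) + 1 + (s * h) • C)) :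
    (∀ s ∈ Set.Icc (0 : ℝ) 1, IsSymplectic (S s)) ∧
    ContinuousOn S (Set.Icc (0 : ℝ) 1) ∧
    S 0 = 1 ∧ S 1 = Sh m h A C D :=
  stmt2_general m h A C D hA hD hinv S hS
end

section
/- The form 𝒜_{h,ω} is Hermitian: for all z̃, w̃ ∈ W̃_ω one has 𝒜_{h,ω}(z̃, w̃) = conj(𝒜_{h,ω}(w̃, z̃)); in particular 𝒜_{h,ω}(z̃, z̃) ∈ ℝ for every z̃ ∈ W̃_ω. -/
/-!
Up to the factor `1/h`, `𝒜(z̃, w̃) - conj 𝒜(w̃, z̃)` is a telescoping sum. The `B`-terms cancel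
because each `B_n` is real symmetric. Because of the staggered grid `z̃_n = (x_{n+1}, y_n)`, the
`J`-terms at step `n` are `Ω(n+1) - Ω(n)` with `Ω(n) = ⟨-J z_n, w_n⟩`, a discrete summation by parts.
For `z̃, w̃ ∈ W̃_ω` with `|ω| = 1` the pairing `Ω` is `N`-periodic, so the sum vanishes.
-/

open Matrix

namespace DHS

/-- The ambient space of pairs of sequences `x, y : ℤ → ℂ^m`. -/
abbrev V (m : ℕ) := (ℤ → Fin m → ℂ) × (ℤ → Fin m → ℂ)

/-- The standard symplectic matrix `J = [[0, -I_m],[I_m, 0]]` in `m × m` blocks. -/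
def Jm (m : ℕ) : Matrix (Fin m ⊕ Fin m) (Fin m ⊕ Fin m) ℂ :=
  Matrix.fromBlocks 0 (-1) 1 0

/-- `z_n = (x_n, y_n) ∈ ℂ^{2m}`. -/
def zf {m : ℕ} (z : V m) (n : ℤ) : Fin m ⊕ Fin m → ℂ := Sum.elim (z.1 n) (z.2 n)

/-- `z̃_n = (x_{n+1}, y_n) ∈ ℂ^{2m}`. -/
def zt {m : ℕ} (z : V m) (n : ℤ) : Fin m ⊕ Fin m → ℂ := Sum.elim (z.1 (n + 1)) (z.2 n)

/-- The standard Hermitian product `⟨u, v⟩ = Σ_i u_i · conj (v_i)` on `ℂ^{2m}`. -/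
noncomputable def herm {α : Type} [Fintype α] (u v : α → ℂ) : ℂ :=
  ∑ i, u i * (starRingEnd ℂ) (v i)

/-- The space `W̃_ω` of pairs of sequences with `x_{n+N} = ω x_n`, `y_{n+N} = ω y_n`. -/
noncomputable def Wt (m N : ℕ) (ω : ℂ) : Submodule ℂ (V m) where
  carrier := {z | ∀ n : ℤ, z.1 (n + (N : ℤ)) = ω • z.1 n ∧ z.2 (n + (N : ℤ)) = ω • z.2 n}
  add_mem' := by
    intro a b ha hb n
    refine ⟨?_, ?_⟩
    · show (a.1 + b.1) (n + (N : ℤ)) = ω • (a.1 + b.1) n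
      simp [Pi.add_apply, (ha n).1, (hb n).1, smul_add]
    · show (a.2 + b.2) (n + (N : ℤ)) = ω • (a.2 + b.2) n
      simp [Pi.add_apply, (ha n).2, (hb n).2, smul_add]
  zero_mem' := by intro n; simp
  smul_mem' := by
    intro c a ha n
    refine ⟨?_, ?_⟩
    · show (c • a.1) (n + (N : ℤ)) = ω • (c • a.1) n
      simp [Pi.smul_apply, (ha n).1, smul_comm c ω]
    · show (c • a.2) (n + (N : ℤ)) = ω • (c • a.2) n
      simp [Pi.smul_apply, (ha n).2, smul_comm c ω]

/-- The form `𝒜_{h,ω}(z̃, w̃) = Σ_{n=1}^{N} [⟨−J(z_{n+1}−z_n)/h, w̃_n⟩ − ⟨B_n z̃_n, w̃_n⟩]`. -/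
noncomputable def Aform (m N : ℕ) (h : ℝ)
    (B : ℤ → Matrix (Fin m ⊕ Fin m) (Fin m ⊕ Fin m) ℝ) (z w : V m) : ℂ :=
  ∑ n ∈ Finset.Icc (1 : ℤ) (N : ℤ),
    (herm (((h : ℂ))⁻¹ • ((-(Jm m)).mulVec (zf z (n + 1) - zf z n))) (zt w n)
      - herm (((B n).map (fun x => (x : ℂ))).mulVec (zt z n)) (zt w n))

lemma herm_add_left {α : Type} [Fintype α] (u v w : α → ℂ) :
    herm (u + v) w = herm u w + herm v w := by
  simp [herm, add_mul, Finset.sum_add_distrib]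

lemma herm_smul_left {α : Type} [Fintype α] (c : ℂ) (u w : α → ℂ) :
    herm (c • u) w = c * herm u w := by
  simp [herm, Finset.mul_sum, mul_assoc]

lemma herm_zero_left {α : Type} [Fintype α] (w : α → ℂ) : herm 0 w = 0 := by
  simp [herm]

lemma zf_add {m : ℕ} (a b : V m) (n : ℤ) : zf (a + b) n = zf a n + zf b n := by
  funext i; cases i <;> rfl

lemma zf_smul {m : ℕ} (c : ℂ) (a : V m) (n : ℤ) : zf (c • a) n = c • zf a n := by
  funext i; cases i <;> rfl

lemma zf_zero {m : ℕ} (n : ℤ) : zf (0 : V m) n = 0 := by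
  funext i; cases i <;> rfl

lemma zt_add {m : ℕ} (a b : V m) (n : ℤ) : zt (a + b) n = zt a n + zt b n := by
  funext i; cases i <;> rfl

lemma zt_smul {m : ℕ} (c : ℂ) (a : V m) (n : ℤ) : zt (c • a) n = c • zt a n := by
  funext i; cases i <;> rfl

lemma zt_zero {m : ℕ} (n : ℤ) : zt (0 : V m) n = 0 := by
  funext i; cases i <;> rfl

lemma Aform_add_left (m N : ℕ) (h : ℝ)
    (B : ℤ → Matrix (Fin m ⊕ Fin m) (Fin m ⊕ Fin m) ℝ) (a b w : V m) :
    Aform m N h B (a + b) w = Aform m N h B a w + Aform m N h B b w := by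
  unfold Aform
  rw [← Finset.sum_add_distrib]
  refine Finset.sum_congr rfl fun n _ => ?_
  rw [zf_add, zf_add, zt_add, add_sub_add_comm, Matrix.mulVec_add, smul_add, herm_add_left,
    Matrix.mulVec_add, herm_add_left]
  ring

lemma Aform_smul_left (m N : ℕ) (h : ℝ)
    (B : ℤ → Matrix (Fin m ⊕ Fin m) (Fin m ⊕ Fin m) ℝ) (c : ℂ) (a w : V m) :
    Aform m N h B (c • a) w = c * Aform m N h B a w := by
  unfold Aform
  rw [Finset.mul_sum]
  refine Finset.sum_congr rfl fun n _ => ?_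
  rw [zf_smul, zf_smul, zt_smul, ← smul_sub]
  simp only [Matrix.mulVec_smul, smul_comm ((h : ℂ))⁻¹ c, herm_smul_left]
  ring

lemma Aform_zero_left (m N : ℕ) (h : ℝ)
    (B : ℤ → Matrix (Fin m ⊕ Fin m) (Fin m ⊕ Fin m) ℝ) (w : V m) :
    Aform m N h B (0 : V m) w = 0 := by
  unfold Aform
  refine Finset.sum_eq_zero fun n _ => ?_
  rw [zf_zero, zf_zero, zt_zero]
  simp [herm_zero_left]

/-- The null space `{z̃ ∈ W̃_ω : 𝒜_{h,ω}(z̃, w̃) = 0 for all w̃ ∈ W̃_ω}`. -/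
noncomputable def nullSp (m N : ℕ) (h : ℝ) (ω : ℂ)
    (B : ℤ → Matrix (Fin m ⊕ Fin m) (Fin m ⊕ Fin m) ℝ) : Submodule ℂ (V m) where
  carrier := {z | z ∈ Wt m N ω ∧ ∀ w ∈ Wt m N ω, Aform m N h B z w = 0}
  add_mem' := by
    intro a b ha hb
    exact ⟨(Wt m N ω).add_mem ha.1 hb.1, fun w hw => by
      rw [Aform_add_left, ha.2 w hw, hb.2 w hw, add_zero]⟩
  zero_mem' := ⟨(Wt m N ω).zero_mem, fun w _ => Aform_zero_left m N h B w⟩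
  smul_mem' := by
    intro c a ha
    exact ⟨(Wt m N ω).smul_mem c ha.1, fun w hw => by
      rw [Aform_smul_left, ha.2 w hw, mul_zero]⟩

/-- `m⁰_{h,ω}`: the dimension of the null space of `𝒜_{h,ω}`. -/
noncomputable def mZero (m N : ℕ) (h : ℝ) (ω : ℂ)
    (B : ℤ → Matrix (Fin m ⊕ Fin m) (Fin m ⊕ Fin m) ℝ) : ℕ :=
  Module.finrank ℂ ↥(nullSp m N h ω B)

/-- `m⁺_{h,ω}`: the maximal dimension of a complex subspace of `W̃_ω` on which
`z̃ ↦ 𝒜_{h,ω}(z̃, z̃)` is positive definite. -/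
noncomputable def mPlus (m N : ℕ) (h : ℝ) (ω : ℂ)
    (B : ℤ → Matrix (Fin m ⊕ Fin m) (Fin m ⊕ Fin m) ℝ) : ℕ :=
  sSup {d : ℕ | ∃ S : Submodule ℂ (V m), S ≤ Wt m N ω ∧ Module.finrank ℂ ↥S = d ∧
    ∀ z ∈ S, z ≠ 0 → 0 < (Aform m N h B z z).re}

/-- `m⁻_{h,ω}`: the maximal dimension of a complex subspace of `W̃_ω` on which
`z̃ ↦ 𝒜_{h,ω}(z̃, z̃)` is negative definite. -/
noncomputable def mMinus (m N : ℕ) (h : ℝ) (ω : ℂ)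
    (B : ℤ → Matrix (Fin m ⊕ Fin m) (Fin m ⊕ Fin m) ℝ) : ℕ :=
  sSup {d : ℕ | ∃ S : Submodule ℂ (V m), S ≤ Wt m N ω ∧ Module.finrank ℂ ↥S = d ∧
    ∀ z ∈ S, z ≠ 0 → (Aform m N h B z z).re < 0}

theorem _root_.Finset.sum_Icc_int_sub {M : Type*} [AddCommGroup M] (f : ℤ → M) {a b : ℤ}
    (hab : a - 1 ≤ b) :
    ∑ n ∈ Finset.Icc a b, (f (n + 1) - f n) = f (b + 1) - f a := by
  induction b, hab using Int.leInduction with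
  | base => simp
  | succ b hab ih =>
    rw [← Finset.insert_Icc_right_eq_Icc_add_one (by omega), Finset.sum_insert (by simp), ih]
    abel

section herm

variable {α β : Type} [Fintype α] [Fintype β]

lemma herm_eq_dotProduct (u v : α → ℂ) : herm u v = u ⬝ᵥ star v := rfl

lemma conj_herm (u v : α → ℂ) : starRingEnd ℂ (herm u v) = herm v u := by
  simp [herm, mul_comm]

lemma herm_smul_right (c : ℂ) (u v : α → ℂ) :
    herm u (c • v) = starRingEnd ℂ c * herm u v := by
  rw [← conj_herm, herm_smul_left, map_mul, conj_herm]

lemma herm_smul_smul_of_norm_eq_one {c : ℂ} (hc : ‖c‖ = 1) (u v : α → ℂ) :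
    herm (c • u) (c • v) = herm u v := by
  rw [herm_smul_left, herm_smul_right, ← mul_assoc, Complex.mul_conj, Complex.normSq_eq_norm_sq,
    hc, one_pow, Complex.ofReal_one, one_mul]

lemma herm_mulVec (A : Matrix α α ℂ) (u v : α → ℂ) : herm (A *ᵥ u) v = herm u (Aᴴ *ᵥ v) := by
  rw [herm_eq_dotProduct, herm_eq_dotProduct, star_mulVec, conjTranspose_conjTranspose,
    dotProduct_comm, dotProduct_mulVec, dotProduct_comm]

lemma herm_elim (a c : α → ℂ) (b d : β → ℂ) :
    herm (Sum.elim a b) (Sum.elim c d) = herm a c + herm b d := by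
  simp [herm, Fintype.sum_sum_type]

end herm

lemma herm_map_ofReal_mulVec_of_isSymm {α : Type} [Fintype α] {R : Matrix α α ℝ} (hR : R.IsSymm)
    (u v : α → ℂ) :
    herm (R.map (fun x => (x : ℂ)) *ᵥ u) v = herm u (R.map (fun x => (x : ℂ)) *ᵥ v) := by
  rw [herm_mulVec, ← conjTranspose_map _ (fun x => (Complex.conj_ofReal x).symm),
    conjTranspose_eq_transpose_of_trivial, hR.eq]

lemma neg_Jm_mulVec {m : ℕ} (a b : Fin m → ℂ) : -Jm m *ᵥ Sum.elim a b = Sum.elim b (-a) := by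
  rw [Jm, fromBlocks_neg, fromBlocks_mulVec]
  simp [neg_mulVec]

lemma zf_add_period {m N : ℕ} {ω : ℂ} {z : V m} (hz : z ∈ Wt m N ω) (n : ℤ) :
    zf z (n + N) = ω • zf z n := by
  ext (i | i) <;> simp [zf, (hz n).1, (hz n).2]

noncomputable def sympPairing {m : ℕ} (z w : V m) (n : ℤ) : ℂ := herm (-Jm m *ᵥ zf z n) (zf w n)

lemma sympPairing_add_period {m N : ℕ} {ω : ℂ} (hω : ‖ω‖ = 1) {z w : V m} (hz : z ∈ Wt m N ω)
    (hw : w ∈ Wt m N ω) (n : ℤ) : sympPairing z w (n + N) = sympPairing z w n := by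
  rw [sympPairing, sympPairing, zf_add_period hz, zf_add_period hw, mulVec_smul,
    herm_smul_smul_of_norm_eq_one hω]

lemma herm_neg_Jm_mulVec_sub_sub {m : ℕ} (z w : V m) (n : ℤ) :
    herm (-Jm m *ᵥ (zf z (n + 1) - zf z n)) (zt w n)
        - herm (zt z n) (-Jm m *ᵥ (zf w (n + 1) - zf w n))
      = sympPairing z w (n + 1) - sympPairing z w n := by
  simp only [sympPairing, zf, zt, ← Sum.elim_sub_sub, neg_Jm_mulVec, herm_elim]
  simp only [herm_eq_dotProduct, star_sub, star_neg, sub_dotProduct, dotProduct_sub, neg_dotProduct,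
    dotProduct_neg]
  ring

lemma Aform_sub_conj_swap {m N : ℕ} {h : ℝ} {B : ℤ → Matrix (Fin m ⊕ Fin m) (Fin m ⊕ Fin m) ℝ}
    (hB : ∀ n, (B n).IsSymm) (z w : V m) :
    Aform m N h B z w - starRingEnd ℂ (Aform m N h B w z)
      = (h : ℂ)⁻¹ * (sympPairing z w (N + 1) - sympPairing z w 1) := by
  rw [← Finset.sum_Icc_int_sub _ (by omega), Finset.mul_sum, Aform, Aform, map_sum,
    ← Finset.sum_sub_distrib]
  refine Finset.sum_congr rfl fun n _ => ?_
  rw [← herm_neg_Jm_mulVec_sub_sub, map_sub, herm_smul_left, herm_smul_left, map_mul, conj_herm,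
    conj_herm, herm_map_ofReal_mulVec_of_isSymm (hB n), map_inv₀, Complex.conj_ofReal]
  ring

theorem stmt3_general (m N : ℕ) (h : ℝ)
    (ω : ℂ) (hω : ‖ω‖ = 1)
    (B : ℤ → Matrix (Fin m ⊕ Fin m) (Fin m ⊕ Fin m) ℝ)
    (hBsym : ∀ n : ℤ, (B n)ᵀ = B n) :
    (∀ z ∈ Wt m N ω, ∀ w ∈ Wt m N ω,
      Aform m N h B z w = (starRingEnd ℂ) (Aform m N h B w z)) ∧
    (∀ z ∈ Wt m N ω, (Aform m N h B z z).im = 0) := by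
  have hermitian : ∀ z ∈ Wt m N ω, ∀ w ∈ Wt m N ω,
      Aform m N h B z w = (starRingEnd ℂ) (Aform m N h B w z) := fun z hz w hw => by
    rw [← sub_eq_zero, Aform_sub_conj_swap hBsym, add_comm, sympPairing_add_period hω hz hw,
      sub_self, mul_zero]
  exact ⟨hermitian, fun z hz => Complex.conj_eq_iff_im.mp (hermitian z hz z hz).symm⟩

/-- the form `𝒜_{h,ω}` is Hermitian; in particular `𝒜_{h,ω}(z̃,z̃)` is real. -/
theorem stmt3 (m N : ℕ) (hm : 1 ≤ m) (hN : 1 ≤ N) (h : ℝ) (hh : 0 < h)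
    (ω : ℂ) (hω : ‖ω‖ = 1)
    (B : ℤ → Matrix (Fin m ⊕ Fin m) (Fin m ⊕ Fin m) ℝ)
    (hBsym : ∀ n : ℤ, (B n)ᵀ = B n) (hBper : ∀ n : ℤ, B (n + (N : ℤ)) = B n) :
    (∀ z ∈ Wt m N ω, ∀ w ∈ Wt m N ω,
      Aform m N h B z w = (starRingEnd ℂ) (Aform m N h B w z)) ∧
    (∀ z ∈ Wt m N ω, (Aform m N h B z z).im = 0) :=
  stmt3_general m N h ω hω B hBsym

end DHS
end

section
/- Let m, N ≥ 1, α ∈ [0,2π), ω = e^{iα}, k ∈ {0,1,…,N−1}, and set α_k = (kπ + α/2)/N. Let a₀ ∈ ℝ^m and define x, y : ℤ → ℂ^m by x_n = i·e^{i(2n−1)α_k}·a₀ and y_n = e^{2inα_k}·a₀. Then x_{n+N} = ω x_n and y_{n+N} = ω y_n for all n ∈ ℤ, and for all n ∈ ℤ one has y_n − y_{n+1} = −2 sin(α_k)·x_{n+1} and x_{n+1} − x_n = −2 sin(α_k)·y_n; equivalently, J(z_{n+1} − z_n) = −2 sin(α_k)·z̃_n where z_n = (x_n, y_n) and z̃_n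 = (x_{n+1}, y_n). -/
/-! Both sequences sample the phase `s ↦ exp (i s α_k)`, `y` at even and `x` (rotated by `i`) at odd
`s`. The difference equations are the identity `e^{i(s+1)θ} - e^{i(s-1)θ} = 2i sin θ · e^{isθ}`,
and the twisted periodicity is `2Nα_k = α + 2kπ`. -/

open Matrix

def Jm (m : ℕ) : Matrix (Fin m ⊕ Fin m) (Fin m ⊕ Fin m) ℂ :=
  Matrix.fromBlocks 0 (-1) 1 0

open Complex

/-! Both sequences sample the phase `s ↦ exp (i s α_k)`, `y` at even and `x` (rotated by `i`) at odd
`s`. The difference equations are the identity `e^{i(s+1)θ} - e^{i(s-1)θ} = 2i sin θ · e^{isθ}`,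
and the twisted periodicity is `2Nα_k = α + 2kπ`. -/

theorem exp_I_mul_add_one_mul_sub_exp_I_mul_sub_one_mul (s θ : ℂ) :
    exp (I * ((s + 1) * θ)) - exp (I * ((s - 1) * θ)) = 2 * I * sin θ * exp (I * (s * θ)) := by
  rw [show I * ((s + 1) * θ) = I * (s * θ) + θ * I by ring,
    show I * ((s - 1) * θ) = I * (s * θ) + -θ * I by ring, exp_add, exp_add, exp_mul_I,
    exp_mul_I, cos_neg, sin_neg]
  ring

theorem exp_I_mul_add_two_mul_natCast_mul {N k : ℕ} (hN : N ≠ 0) {α θ : ℝ}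
    (hθ : θ = (k * Real.pi + α / 2) / N) (s : ℂ) :
    exp (I * ((s + 2 * N) * θ)) = exp (I * α) * exp (I * (s * θ)) := by
  have hNθ : (N : ℂ) * θ = k * Real.pi + α / 2 := by
    rw [hθ]; push_cast; field_simp
  rw [show I * ((s + 2 * N) * θ) = I * α + (k : ℤ) * (2 * Real.pi * I) + I * (s * θ) by
    push_cast; linear_combination 2 * I * hNθ, exp_add, exp_add, exp_int_mul_two_pi_mul_I, mul_one]

theorem Jm_mulVec_sub {m : ℕ} (u v u' v' : Fin m → ℂ) :
    Jm m *ᵥ (Sum.elim u' v' - Sum.elim u v) = Sum.elim (v - v') (u' - u) := by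
  ext (j | j) <;> simp [Jm, fromBlocks_mulVec, Function.comp_def, neg_mulVec]

section

variable {V : Type*} [AddCommGroup V] [Module ℂ V] (θ : ℝ) (v : V)

noncomputable def xSeq (n : ℤ) : V := (I * exp (I * ((2 * n - 1) * θ))) • v

noncomputable def ySeq (n : ℤ) : V := exp (I * (2 * n * θ)) • v

theorem ySeq_sub_ySeq_add_one (n : ℤ) :
    ySeq θ v n - ySeq θ v (n + 1) = ((-(2 * Real.sin θ) : ℝ) : ℂ) • xSeq θ v (n + 1) := by
  have h := exp_I_mul_add_one_mul_sub_exp_I_mul_sub_one_mul (2 * n + 1) θ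
  rw [show (2 * n + 1 + 1 : ℂ) = 2 * (n + 1) by ring, show (2 * n + 1 - 1 : ℂ) = 2 * n by ring,
    show (2 * n + 1 : ℂ) = 2 * (n + 1) - 1 by ring] at h
  rw [ySeq, ySeq, xSeq, ← sub_smul, smul_smul]
  push_cast
  congr 1
  linear_combination -h

theorem xSeq_add_one_sub_xSeq (n : ℤ) :
    xSeq θ v (n + 1) - xSeq θ v n = ((-(2 * Real.sin θ) : ℝ) : ℂ) • ySeq θ v n := by
  have h := exp_I_mul_add_one_mul_sub_exp_I_mul_sub_one_mul (2 * n) θ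
  rw [show (2 * n + 1 : ℂ) = 2 * (n + 1) - 1 by ring] at h
  rw [ySeq, xSeq, xSeq, ← sub_smul, smul_smul]
  push_cast
  congr 1
  linear_combination I * h + 2 * sin θ * exp (I * (2 * n * θ)) * I_sq

theorem xSeq_add_natCast {N k : ℕ} (hN : N ≠ 0) {α : ℝ} (hθ : θ = (k * Real.pi + α / 2) / N)
    (n : ℤ) : xSeq θ v (n + N) = exp (I * α) • xSeq θ v n := by
  rw [xSeq, xSeq, smul_smul]
  push_cast
  rw [show 2 * ((n : ℂ) + N) - 1 = 2 * n - 1 + 2 * N by ring,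
    exp_I_mul_add_two_mul_natCast_mul hN hθ, mul_left_comm]

theorem ySeq_add_natCast {N k : ℕ} (hN : N ≠ 0) {α : ℝ} (hθ : θ = (k * Real.pi + α / 2) / N)
    (n : ℤ) : ySeq θ v (n + N) = exp (I * α) • ySeq θ v n := by
  rw [ySeq, ySeq, smul_smul]
  push_cast
  rw [show 2 * ((n : ℂ) + N) = 2 * n + 2 * N by ring, exp_I_mul_add_two_mul_natCast_mul hN hθ]

end

theorem stmt7_general (m N : ℕ) (hN : 1 ≤ N)
    (α : ℝ)
    (ω : ℂ) (hωα : ω = Complex.exp (Complex.I * α))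
    (k : ℕ)
    (αk : ℝ) (hαk : αk = ((k : ℝ) * Real.pi + α / 2) / N)
    (a₀ : Fin m → ℝ) (x y : ℤ → Fin m → ℂ)
    (hx : ∀ (n : ℤ) (i : Fin m),
      x n i = Complex.I * Complex.exp (Complex.I * ((2 * (n : ℂ) - 1) * (αk : ℂ))) * (a₀ i : ℂ))
    (hy : ∀ (n : ℤ) (i : Fin m),
      y n i = Complex.exp (Complex.I * (2 * (n : ℂ) * (αk : ℂ))) * (a₀ i : ℂ)) :
    (∀ n : ℤ, x (n + (N : ℤ)) = ω • x n ∧ y (n + (N : ℤ)) = ω • y n) ∧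
    (∀ n : ℤ, y n - y (n + 1) = ((-(2 * Real.sin αk) : ℝ) : ℂ) • x (n + 1) ∧
      x (n + 1) - x n = ((-(2 * Real.sin αk) : ℝ) : ℂ) • y n) ∧
    (∀ n : ℤ, (Jm m).mulVec (Sum.elim (x (n + 1)) (y (n + 1)) - Sum.elim (x n) (y n)) =
      ((-(2 * Real.sin αk) : ℝ) : ℂ) • Sum.elim (x (n + 1)) (y n)) := by
  obtain rfl : x = xSeq αk (fun i => (a₀ i : ℂ)) := by ext n i; simp [hx, xSeq]
  obtain rfl : y = ySeq αk (fun i => (a₀ i : ℂ)) := by ext n i; simp [hy, ySeq]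
  have hN₀ : N ≠ 0 := Nat.one_le_iff_ne_zero.mp hN
  subst hωα
  refine ⟨fun n => ⟨xSeq_add_natCast _ _ hN₀ hαk n, ySeq_add_natCast _ _ hN₀ hαk n⟩,
    fun n => ⟨ySeq_sub_ySeq_add_one _ _ n, xSeq_add_one_sub_xSeq _ _ n⟩, fun n => ?_⟩
  rw [Jm_mulVec_sub, ySeq_sub_ySeq_add_one, xSeq_add_one_sub_xSeq]
  ext (j | j) <;> rfl

/-- the sequences `x_n = i e^{i(2n−1)α_k} a₀`, `y_n = e^{2inα_k} a₀`
satisfy the boundary condition `z_{n+N} = ω z_n` and the eigenvalue equations for the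
eigenvalue `−2 sin(α_k)`. -/
theorem stmt7 (m N : ℕ) (hm : 1 ≤ m) (hN : 1 ≤ N)
    (α : ℝ) (hα : α ∈ Set.Ico (0 : ℝ) (2 * Real.pi))
    (ω : ℂ) (hωα : ω = Complex.exp (Complex.I * α))
    (k : ℕ) (hk : k < N)
    (αk : ℝ) (hαk : αk = ((k : ℝ) * Real.pi + α / 2) / N)
    (a₀ : Fin m → ℝ) (x y : ℤ → Fin m → ℂ)
    (hx : ∀ (n : ℤ) (i : Fin m),
      x n i = Complex.I * Complex.exp (Complex.I * ((2 * (n : ℂ) - 1) * (αk : ℂ))) * (a₀ i : ℂ))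
    (hy : ∀ (n : ℤ) (i : Fin m),
      y n i = Complex.exp (Complex.I * (2 * (n : ℂ) * (αk : ℂ))) * (a₀ i : ℂ)) :
    (∀ n : ℤ, x (n + (N : ℤ)) = ω • x n ∧ y (n + (N : ℤ)) = ω • y n) ∧
    (∀ n : ℤ, y n - y (n + 1) = ((-(2 * Real.sin αk) : ℝ) : ℂ) • x (n + 1) ∧
      x (n + 1) - x n = ((-(2 * Real.sin αk) : ℝ) : ℂ) • y n) ∧
    (∀ n : ℤ, (Jm m).mulVec (Sum.elim (x (n + 1)) (y (n + 1)) - Sum.elim (x n) (y n)) =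
      ((-(2 * Real.sin αk) : ℝ) : ℂ) • Sum.elim (x (n + 1)) (y n)) :=
  stmt7_general m N hN α ω hωα k αk hαk a₀ x y hx hy
end

section
/- Let m ≥ 1, let t₀ < T₀ be reals, let f : [t₀,T₀] × ℂ^{2m} → ℂ^{2m} be continuous and satisfy ‖f(t,u) − f(t,v)‖ ≤ L‖u − v‖ for some L > 0 and all t ∈ [t₀,T₀], u, v ∈ ℂ^{2m}, and let z : [t₀,T₀] → ℂ^{2m} be continuously differentiable with z'(t) = f(t, z(t)) for all t. For N ≥ 1 set h = (T₀−t₀)/N and t_n = t₀ + nh. Then for every ε > 0 there exists N₀ such that for all N ≥ N₀ the following holds: every finite sequence z_0, …, z_N in ℂ^{2m}, written z_n = (x_n, y_n) with x_n, y_n ∈ ℂ^m, satisfying z_0 = z(t₀) and z_{n+1} = z_n + h·f(t_n, (x_{n+1}, y_n)) for 0 ≤ n ≤ N−1, satisfies max_{0 ≤ n ≤ N} ‖z(t_n) − z_n‖ ≤ ε. -/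
/-!
Writing `e_n = z(t_n) - z_n`, the increment `f(t_n, (x_{n+1}, y_n))` differs from the exact slope
`f(t_n, z(t_n))` by at most `L (‖z(t_n) - z_{n+1}‖ + ‖z(t_n) - z_n‖)`, because the norm of a glued
vector is at most the sum of the norms of the vectors it is glued from. Uniform continuity of
`t ↦ f(t, z(t))` makes the local truncation error at most `ε h` for small `h`. The implicit term
`h L ‖e_{n+1}‖` is absorbed once `h L ≤ 1/2`, which leaves `‖e_{n+1}‖ ≤ (1 + 4hL) ‖e_n‖ + 4εh`,
and the discrete Grönwall inequality bounds `‖e_n‖` by `4ε (T₀ - t₀) exp (4L (T₀ - t₀))`.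
-/

open Matrix

/-- `glue u v` is the vector of `ℂ^{2m}` whose first half (the `x`-components) is taken
from `u` and whose second half (the `y`-components) is taken from `v`. -/
noncomputable def glue {m : ℕ} (u v : EuclideanSpace ℂ (Fin m ⊕ Fin m)) :
    EuclideanSpace ℂ (Fin m ⊕ Fin m) :=
  (EuclideanSpace.equiv (Fin m ⊕ Fin m) ℂ).symm
    (Sum.elim (fun a => u (Sum.inl a)) (fun a => v (Sum.inr a)))

open Set Filter Topology Real

section Glue

variable {m : ℕ}

lemma glue_self (u : EuclideanSpace ℂ (Fin m ⊕ Fin m)) : glue u u = u := by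
  ext i; cases i <;> rfl

lemma glue_sub (u v u' v' : EuclideanSpace ℂ (Fin m ⊕ Fin m)) :
    glue u v - glue u' v' = glue (u - u') (v - v') := by
  ext i; cases i <;> rfl

lemma norm_glue_le (u v : EuclideanSpace ℂ (Fin m ⊕ Fin m)) : ‖glue u v‖ ≤ ‖u‖ + ‖v‖ := by
  refine le_of_pow_le_pow_left₀ two_ne_zero (by positivity) ?_
  have hsq : ‖glue u v‖ ^ 2 ≤ ‖u‖ ^ 2 + ‖v‖ ^ 2 := by
    simp only [EuclideanSpace.norm_sq_eq, Fintype.sum_sum_type]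
    have hu : 0 ≤ ∑ a : Fin m, ‖u (Sum.inr a)‖ ^ 2 := by positivity
    have hv : 0 ≤ ∑ a : Fin m, ‖v (Sum.inl a)‖ ^ 2 := by positivity
    change ∑ a, ‖u (Sum.inl a)‖ ^ 2 + ∑ a, ‖v (Sum.inr a)‖ ^ 2 ≤ _
    linarith
  nlinarith [norm_nonneg u, norm_nonneg v]

lemma norm_sub_glue_le (x u v : EuclideanSpace ℂ (Fin m ⊕ Fin m)) :
    ‖x - glue u v‖ ≤ ‖x - u‖ + ‖x - v‖ := by
  calc ‖x - glue u v‖ = ‖glue (x - u) (x - v)‖ := by rw [← glue_sub, glue_self]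
    _ ≤ ‖x - u‖ + ‖x - v‖ := norm_glue_le _ _

end Glue

lemma le_one_add_four_mul_mul_add_two_mul_of_le {x E₀ E₁ r : ℝ} (hx₀ : 0 ≤ x) (hx : x ≤ 1 / 2)
    (hE₀ : 0 ≤ E₀) (hr : 0 ≤ r) (h : E₁ ≤ E₀ + x * (E₁ + E₀) + r) :
    E₁ ≤ (1 + 4 * x) * E₀ + 2 * r := by
  nlinarith [mul_nonneg (mul_nonneg hx₀ hE₀) (by linarith : 0 ≤ 1 - 2 * x)]

section EulerScheme

variable {E : Type*} [NormedAddCommGroup E] [NormedSpace ℝ E]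

theorem norm_sub_sub_smul_le_of_norm_deriv_sub_le {z g : ℝ → E} {c : E} {a b ε : ℝ}
    (hab : a ≤ b) (hz : ∀ s ∈ Icc a b, HasDerivWithinAt z (g s) (Icc a b) s)
    (hg : ∀ s ∈ Icc a b, ‖g s - c‖ ≤ ε) :
    ‖z b - z a - (b - a) • c‖ ≤ ε * (b - a) := by
  have hzc : ∀ s ∈ Icc a b,
      HasDerivWithinAt (fun s => z s - s • c) (g s - c) (Icc a b) s := fun s hs => by
    have := (hz s hs).sub ((hasDerivWithinAt_id s _).smul_const c)
    rwa [one_smul] at this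
  convert norm_image_sub_le_of_norm_deriv_le_segment' hzc
    (fun s hs => hg s (Ico_subset_Icc_self hs)) b (right_mem_Icc.2 hab) using 2
  rw [sub_smul]; abel

theorem norm_sub_le_of_euler_step {z g : ℝ → E} {a h L M ε : ℝ} {x₀ x₁ F : E} (hh : 0 ≤ h)
    (hL : 0 ≤ L) (hz : ∀ s ∈ Icc a (a + h), HasDerivWithinAt z (g s) (Icc a (a + h)) s)
    (hgM : ∀ s ∈ Icc a (a + h), ‖g s‖ ≤ M) (hgε : ∀ s ∈ Icc a (a + h), ‖g s - g a‖ ≤ ε)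
    (hx₁ : x₁ = x₀ + h • F) (hF : ‖g a - F‖ ≤ L * (‖z a - x₁‖ + ‖z a - x₀‖)) :
    ‖z (a + h) - x₁‖ ≤ ‖z a - x₀‖ + h * L * (‖z (a + h) - x₁‖ + ‖z a - x₀‖ + M * h) + ε * h := by
  have hab : a ≤ a + h := le_add_of_nonneg_right hh
  have htrunc : ‖z (a + h) - z a - h • g a‖ ≤ ε * h := by
    simpa using norm_sub_sub_smul_le_of_norm_deriv_sub_le hab hz hgε
  have hdrift : ‖z (a + h) - z a‖ ≤ M * h := by
    simpa using norm_image_sub_le_of_norm_deriv_le_segment' hz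
      (fun s hs => hgM s (Ico_subset_Icc_self hs)) (a + h) (right_mem_Icc.2 hab)
  have hx₁a : ‖z a - x₁‖ ≤ ‖z (a + h) - x₁‖ + M * h := by
    calc ‖z a - x₁‖ ≤ ‖z (a + h) - x₁‖ + ‖z (a + h) - z a‖ := by
          rw [add_comm, norm_sub_rev (z (a + h))]
          exact norm_sub_le_norm_sub_add_norm_sub _ _ _
      _ ≤ _ := by gcongr
  calc ‖z (a + h) - x₁‖ = ‖(z a - x₀) + h • (g a - F) + (z (a + h) - z a - h • g a)‖ := by
        rw [hx₁, smul_sub]; congr 1; abel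
    _ ≤ ‖z a - x₀‖ + h * ‖g a - F‖ + ε * h := by
        refine norm_add₃_le.trans ?_
        rw [norm_smul, Real.norm_of_nonneg hh]
        gcongr
    _ ≤ ‖z a - x₀‖ + h * (L * (‖z (a + h) - x₁‖ + M * h + ‖z a - x₀‖)) + ε * h := by
        gcongr; exact hF.trans (by gcongr)
    _ = _ := by ring

lemma add_nat_mul_mem_Icc {t₀ T h : ℝ} {N k : ℕ} (hh : 0 ≤ h) (hNT : t₀ + N * h ≤ T)
    (hk : k ≤ N) : t₀ + k * h ∈ Icc t₀ T :=
  ⟨le_add_of_nonneg_right (by positivity), le_trans (by gcongr) hNT⟩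

theorem norm_sub_le_of_euler_scheme {z g : ℝ → E} {zs F : ℕ → E} {t₀ T h L M ε : ℝ} {N : ℕ}
    (hh : 0 ≤ h) (hL : 0 ≤ L) (hhL : h * L ≤ 1 / 2) (hhLM : h * L * M ≤ ε)
    (hNT : t₀ + N * h ≤ T) (hz : ∀ s ∈ Icc t₀ T, HasDerivWithinAt z (g s) (Icc t₀ T) s)
    (hgM : ∀ s ∈ Icc t₀ T, ‖g s‖ ≤ M)
    (hgε : ∀ s ∈ Icc t₀ T, ∀ s' ∈ Icc t₀ T, dist s s' ≤ h → ‖g s - g s'‖ ≤ ε)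
    (h0 : zs 0 = z t₀) (hstep : ∀ n < N, zs (n + 1) = zs n + h • F n)
    (hF : ∀ n < N, ‖g (t₀ + n * h) - F n‖ ≤
      L * (‖z (t₀ + n * h) - zs (n + 1)‖ + ‖z (t₀ + n * h) - zs n‖))
    {n : ℕ} (hn : n ≤ N) :
    ‖z (t₀ + n * h) - zs n‖ ≤ 4 * ε * (n * h) * exp (4 * L * (n * h)) := by
  set e : ℕ → ℝ := fun k => ‖z (t₀ + k * h) - zs k‖ with he
  have hmem : ∀ k ≤ N, t₀ + k * h ∈ Icc t₀ T := fun k hk => add_nat_mul_mem_Icc hh hNT hk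
  have ht₀ : t₀ ∈ Icc t₀ T := by simpa using hmem 0 N.zero_le
  have hε : 0 ≤ ε := by simpa using hgε t₀ ht₀ t₀ ht₀ (by simpa using hh)
  have he_succ : ∀ k < N, e (k + 1) ≤ (1 + 4 * (h * L)) * e k + 4 * ε * h := by
    intro k hk
    have hsub : Icc (t₀ + k * h) (t₀ + k * h + h) ⊆ Icc t₀ T := by
      refine Icc_subset_Icc (hmem k hk.le).1 ?_
      simpa [add_mul, add_assoc] using (hmem (k + 1) hk).2
    have hraw := norm_sub_le_of_euler_step hh hL (fun s hs => (hz s (hsub hs)).mono hsub)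
      (fun s hs => hgM s (hsub hs))
      (fun s hs => hgε s (hsub hs) _ (hsub (left_mem_Icc.2 (by linarith)))
        (by rw [Real.dist_eq, abs_of_nonneg (by linarith [hs.1])]; linarith [hs.2]))
      (hstep k hk) (hF k hk)
    have hMh : h * L * (M * h) ≤ ε * h := by nlinarith
    have hnext : t₀ + ((k + 1 : ℕ) : ℝ) * h = t₀ + k * h + h := by push_cast; ring
    simp only [he, hnext]
    linarith [le_one_add_four_mul_mul_add_two_mul_of_le (E₀ := ‖z (t₀ + k * h) - zs k‖)
      (E₁ := ‖z (t₀ + k * h + h) - zs (k + 1)‖) (r := 2 * ε * h) (by positivity) hhL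
      (norm_nonneg _) (by positivity) (by linarith)]
  -- `e (min k N)` is constant from `k = N` on, so the Grönwall recursion holds for every `k`
  have hgron := discrete_gronwall (u := fun k => e (min k N)) (c := fun _ => 4 * (h * L))
    (b := fun _ => 4 * ε * h) (n₀ := 0) (norm_nonneg _) (fun k _ => by
      rcases lt_or_ge k N with hk | hk
      · simpa [Nat.min_eq_left hk, Nat.min_eq_left hk.le] using he_succ k hk
      · simp only [Nat.min_eq_right hk, Nat.min_eq_right (hk.trans k.le_succ)]
        have : 0 ≤ e N := norm_nonneg _
        nlinarith [mul_nonneg (mul_nonneg hh hL) this])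
    (fun _ _ => by positivity) (fun _ _ => by positivity) n.zero_le
  simp only [he, Nat.min_eq_left hn, zero_le, inf_of_le_left, CharP.cast_eq_zero, zero_mul,
    add_zero, h0, sub_self, norm_zero, Nat.Ico_zero_eq_range, Finset.sum_const, Finset.card_range,
    nsmul_eq_mul, zero_add] at hgron
  convert hgron using 1; ring_nf

end EulerScheme

theorem stmt12_general (m : ℕ) (t₀ T₀ : ℝ) (hT : t₀ < T₀)
    (f : ℝ → EuclideanSpace ℂ (Fin m ⊕ Fin m) → EuclideanSpace ℂ (Fin m ⊕ Fin m))
    (hfcont : ContinuousOn (fun p : ℝ × EuclideanSpace ℂ (Fin m ⊕ Fin m) => f p.1 p.2)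
      (Set.Icc t₀ T₀ ×ˢ Set.univ))
    (L : ℝ) (hL : 0 < L)
    (hlip : ∀ t ∈ Set.Icc t₀ T₀, ∀ u v : EuclideanSpace ℂ (Fin m ⊕ Fin m),
      ‖f t u - f t v‖ ≤ L * ‖u - v‖)
    (z : ℝ → EuclideanSpace ℂ (Fin m ⊕ Fin m))
    (hz : ∀ t ∈ Set.Icc t₀ T₀, HasDerivAt z (f t (z t)) t) :
    ∀ ε > (0 : ℝ), ∃ N₀ : ℕ, ∀ N : ℕ, N₀ ≤ N → 1 ≤ N →
      ∀ zs : ℕ → EuclideanSpace ℂ (Fin m ⊕ Fin m),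
        zs 0 = z t₀ →
        (∀ n : ℕ, n < N →
          zs (n + 1) = zs n + (((T₀ - t₀) / N : ℝ) : ℂ) •
            f (t₀ + (n : ℝ) * ((T₀ - t₀) / N)) (glue (zs (n + 1)) (zs n))) →
        ∀ n : ℕ, n ≤ N → ‖z (t₀ + (n : ℝ) * ((T₀ - t₀) / N)) - zs n‖ ≤ ε := by
  intro ε hε
  have hD : 0 < T₀ - t₀ := sub_pos.2 hT
  have hgc : ContinuousOn (fun t => f t (z t)) (Icc t₀ T₀) :=
    hfcont.comp (continuousOn_id.prodMk fun t ht => (hz t ht).continuousAt.continuousWithinAt)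
      fun t ht => ⟨ht, mem_univ _⟩
  obtain ⟨M, hM⟩ := isCompact_Icc.exists_bound_of_continuousOn hgc
  set ε' := ε / (4 * (T₀ - t₀) * exp (4 * L * (T₀ - t₀))) with hε'_def
  have hε' : 0 < ε' := by positivity
  obtain ⟨δ, hδ, hgδ⟩ :=
    Metric.uniformContinuousOn_iff.1 (isCompact_Icc.uniformContinuousOn_of_continuous hgc) ε' hε'
  have hstep_zero : Tendsto (fun N : ℕ => (T₀ - t₀) / N) atTop (𝓝 0) :=
    tendsto_const_div_atTop_nhds_zero_nat _
  obtain ⟨N₀, hN₀⟩ := eventually_atTop.1 <| (hstep_zero.eventually (gt_mem_nhds hδ)).and <|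
    ((hstep_zero.mul_const L).eventually (ge_mem_nhds (by norm_num : (0 : ℝ) * L < 1 / 2))).and
      (((hstep_zero.mul_const L).mul_const M).eventually (ge_mem_nhds (by simpa using hε')))
  refine ⟨N₀, fun N hN hN1 zs h0 hzs n hn => ?_⟩
  obtain ⟨hδN, hLN, hMN⟩ := hN₀ N hN
  have hNh : N * ((T₀ - t₀) / N) = T₀ - t₀ := mul_div_cancel₀ _ (Nat.cast_ne_zero.2 (by omega))
  have hNT : t₀ + N * ((T₀ - t₀) / N) ≤ T₀ := by rw [hNh, add_sub_cancel]
  have hh : 0 ≤ (T₀ - t₀) / N := by positivity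
  calc _ ≤ 4 * ε' * (n * ((T₀ - t₀) / N)) * exp (4 * L * (n * ((T₀ - t₀) / N))) :=
        norm_sub_le_of_euler_scheme hh hL.le hLN hMN hNT
          (fun t ht => (hz t ht).hasDerivWithinAt) hM
          (fun s hs s' hs' hss' => by
            rw [← dist_eq_norm]; exact (hgδ s hs s' hs' (hss'.trans_lt hδN)).le)
          h0 (fun k hk => by rw [hzs k hk, Complex.coe_smul])
          (fun k hk => (hlip _ (add_nat_mul_mem_Icc hh hNT hk.le) _ _).trans
            (by gcongr; exact norm_sub_glue_le _ _ _)) hn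
    _ ≤ 4 * ε' * (T₀ - t₀) * exp (4 * L * (T₀ - t₀)) := by
        have : n * ((T₀ - t₀) / N) ≤ T₀ - t₀ :=
          (mul_le_mul_of_nonneg_right (by exact_mod_cast hn) hh).trans hNh.le
        gcongr
    _ = ε := by rw [hε'_def]; field_simp

/-- error estimate for the semi-implicit Euler scheme
`z_{n+1} = z_n + h f(t_n, (x_{n+1}, y_n))` applied to a Lipschitz ODE `z' = f(t, z)`:
the nodal errors `‖z(t_n) − z_n‖` are uniformly `≤ ε` for `N` large enough. -/
theorem stmt12 (m : ℕ) (hm : 1 ≤ m) (t₀ T₀ : ℝ) (hT : t₀ < T₀)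
    (f : ℝ → EuclideanSpace ℂ (Fin m ⊕ Fin m) → EuclideanSpace ℂ (Fin m ⊕ Fin m))
    (hfcont : ContinuousOn (fun p : ℝ × EuclideanSpace ℂ (Fin m ⊕ Fin m) => f p.1 p.2)
      (Set.Icc t₀ T₀ ×ˢ Set.univ))
    (L : ℝ) (hL : 0 < L)
    (hlip : ∀ t ∈ Set.Icc t₀ T₀, ∀ u v : EuclideanSpace ℂ (Fin m ⊕ Fin m),
      ‖f t u - f t v‖ ≤ L * ‖u - v‖)
    (z : ℝ → EuclideanSpace ℂ (Fin m ⊕ Fin m))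
    (hz : ∀ t ∈ Set.Icc t₀ T₀, HasDerivAt z (f t (z t)) t) :
    ∀ ε > (0 : ℝ), ∃ N₀ : ℕ, ∀ N : ℕ, N₀ ≤ N → 1 ≤ N →
      ∀ zs : ℕ → EuclideanSpace ℂ (Fin m ⊕ Fin m),
        zs 0 = z t₀ →
        (∀ n : ℕ, n < N →
          zs (n + 1) = zs n + (((T₀ - t₀) / N : ℝ) : ℂ) •
            f (t₀ + (n : ℝ) * ((T₀ - t₀) / N)) (glue (zs (n + 1)) (zs n))) →
        ∀ n : ℕ, n ≤ N → ‖z (t₀ + (n : ℝ) * ((T₀ - t₀) / N)) - zs n‖ ≤ ε :=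
  stmt12_general m t₀ T₀ hT f hfcont L hL hlip z hz
end

section
/- Let m ≥ 1 and t₀ < T₀ be reals. Let B : [0,1] × [t₀,T₀] → {2m×2m real symmetric matrices} be continuous, and let z : [0,1] × [t₀,T₀] → ℂ^{2m}, (s,t) ↦ z_s(t), be continuous and such that for each s ∈ [0,1] the map t ↦ z_s(t) is continuously differentiable with z_s'(t) = J·B(s,t)·z_s(t) for all t. For N ≥ 1 set h = (T₀−t₀)/N and t_n = t₀ + nh. Then for every ε > 0 there exists N₀ such that for all N ≥ N₀ and all s ∈ [0,1]: every sequence z_{s,0}, …, z_{s,N} in ℂ^{2m}, written z_{s,n} = (x_{s,n}, y_{s,n}) with x_{s,n}, y_{s,n} ∈ ℂ^m, satisfying z_{s,0} = z_s(t₀) and z_{s,n+1} = z_{s,n} + h·J·B(s,t_n)·(x_{s,n+1}, y_{s,n}) for 0 ≤ n ≤ N−1, satisfies max_{0 ≤ n ≤ N} ‖z_s(t_n) − z_{s,n}‖ ≤ ε; in particular the error bound is uniform in the parameter s. -/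
open Matrix

/-- Multiplication of a `2m × 2m` complex matrix with a vector of `ℂ^{2m}`. -/
noncomputable def mvE {m : ℕ} (M : Matrix (Fin m ⊕ Fin m) (Fin m ⊕ Fin m) ℂ)
    (v : EuclideanSpace ℂ (Fin m ⊕ Fin m)) : EuclideanSpace ℂ (Fin m ⊕ Fin m) :=
  (EuclideanSpace.equiv (Fin m ⊕ Fin m) ℂ).symm
    (M.mulVec ((EuclideanSpace.equiv (Fin m ⊕ Fin m) ℂ) v))

/-! The semi-implicit Euler step `z_{n+1} = z_n + h A_n G(z_{n+1}, z_n)`, where `G(u, v)` takes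
the `x`-part of `u` and the `y`-part of `v`, is linear, so the error `e_n = z_s(t_n) - z_{s,n}`
satisfies the same recursion up to the local defect of the exact solution. By the mean value
inequality this defect is at most `h W` once `h` is small, uniformly in `s`, because
`A(s,t) z_s(t)` and `z` are uniformly continuous on the compact set `[0,1] × [t₀,T₀]`. For
`2 h ‖A‖ ‖G‖ ≤ 1` the implicit step can be solved for `‖e_{n+1}‖`, and the discrete Gronwall
inequality bounds the global error by `2 (T₀ - t₀) W exp (4 (T₀ - t₀) ‖A‖ ‖G‖)`. -/

open Set Real

theorem discrete_gronwall_of_lt {u : ℕ → ℝ} {a b : ℝ} {N : ℕ} (ha : 0 ≤ a)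
    (hb : 0 ≤ b) (hu0 : u 0 = 0) (hu_nonneg : ∀ n, 0 ≤ u n)
    (hstep : ∀ n < N, u (n + 1) ≤ (1 + a) * u n + b) :
    ∀ n ≤ N, u n ≤ n * b * exp (n * a) := by
  intro n hn
  -- Freezing `u` at `N` makes the recursion hold for every `n`, as `discrete_gronwall` requires.
  have hstop : ∀ k, u (min (k + 1) N) ≤ (1 + a) * u (min k N) + b := by
    intro k
    rcases lt_or_ge k N with hk | hk
    · rw [min_eq_left hk, min_eq_left hk.le]
      exact hstep k hk
    · rw [min_eq_right hk, min_eq_right (by omega)]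
      nlinarith [hu_nonneg N]
  simpa [hu0, min_eq_left hn] using discrete_gronwall (u := fun k => u (min k N))
    (c := fun _ => a) (b := fun _ => b) (by simp [hu0]) (fun k _ => hstop k) (fun _ _ => ha)
    (fun _ _ => hb) (Nat.zero_le n)

theorem implicit_step_bound {x y c r : ℝ} (hc : 0 ≤ c) (hc2 : 2 * c ≤ 1) (hx : 0 ≤ x)
    (hr : 0 ≤ r) (h : y ≤ x + c * (y + x) + r) : y ≤ (1 + 4 * c) * x + 2 * r := by
  nlinarith [mul_nonneg hc hx, mul_nonneg (mul_nonneg hc hc) hx]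

theorem IsCompact.exists_forall_dist_lt_of_abs_sub_lt {X Y : Type*} [PseudoMetricSpace X]
    [PseudoMetricSpace Y] {K : Set (X × ℝ)} (hK : IsCompact K) {f : X × ℝ → Y}
    (hf : ContinuousOn f K) {ε : ℝ} (hε : 0 < ε) :
    ∃ δ > 0, ∀ s x y, (s, x) ∈ K → (s, y) ∈ K → |x - y| < δ →
      dist (f (s, x)) (f (s, y)) < ε := by
  obtain ⟨δ, hδ, hf⟩ :=
    Metric.uniformContinuousOn_iff.1 (hK.uniformContinuousOn_of_continuous hf) ε hε
  refine ⟨δ, hδ, fun s x y hx hy hxy => hf _ hx _ hy ?_⟩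
  rwa [Prod.dist_eq, dist_self, Real.dist_eq, max_eq_right (abs_nonneg _)]

theorem add_nat_mul_div_mem_Icc {t₀ T₀ : ℝ} (hT : t₀ ≤ T₀) {n N : ℕ} (hn : n ≤ N) :
    t₀ + n * ((T₀ - t₀) / N) ∈ Icc t₀ T₀ := by
  have hΔ : 0 ≤ T₀ - t₀ := sub_nonneg.2 hT
  refine ⟨le_add_of_nonneg_right (by positivity), ?_⟩
  rw [← le_sub_iff_add_le', mul_div_assoc']
  exact div_le_of_le_mul₀ (Nat.cast_nonneg _) hΔ
    (by rw [mul_comm]; exact mul_le_mul_of_nonneg_left (by exact_mod_cast hn) hΔ)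

theorem exists_nat_forall_div_lt (Δ : ℝ) {d : ℝ} (hd : 0 < d) :
    ∃ N₀ : ℕ, ∀ N ≥ N₀, (0 : ℝ) < N ∧ Δ / N < d := by
  obtain ⟨N₀, hN₀⟩ := exists_nat_gt (Δ / d)
  refine ⟨N₀ + 1, fun N hN => ?_⟩
  have hN₀N : Δ / d < N := hN₀.trans (by exact_mod_cast Nat.lt_of_succ_le hN)
  have hNpos : (0 : ℝ) < N := by exact_mod_cast Nat.zero_lt_of_lt hN
  refine ⟨hNpos, ?_⟩
  rwa [div_lt_iff₀ hNpos, mul_comm, ← div_lt_iff₀ hd]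

section SemiImplicitEuler

variable {E : Type*} [NormedAddCommGroup E] [NormedSpace ℝ E] (G : E × E →L[ℝ] E)

theorem ContinuousLinearMap.norm_apply_prod_le (u v : E) : ‖G (u, v)‖ ≤ ‖G‖ * (‖u‖ + ‖v‖) :=
  (G.le_opNorm _).trans (by gcongr; exact max_le_add_of_nonneg (norm_nonneg _) (norm_nonneg _))

/-- The residual of `(u, v) = (z_n, z_{n+1})` in the step
`z_{n+1} = z_n + h A (G (z_{n+1}, z_n))`. -/
def schemeDefect (A : E →L[ℝ] E) (h : ℝ) (u v : E) : E := v - u - h • A (G (v, u))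

theorem schemeDefect_sub (A : E →L[ℝ] E) (h : ℝ) (u v u' v' : E) :
    schemeDefect G A h u v - schemeDefect G A h u' v' =
      schemeDefect G A h (u - u') (v - v') := by
  simp only [schemeDefect, ← Prod.mk_sub_mk, map_sub, smul_sub]
  abel

theorem schemeDefect_eq_zero_iff (A : E →L[ℝ] E) (h : ℝ) (u v : E) :
    schemeDefect G A h u v = 0 ↔ v = u + h • A (G (v, u)) := by
  rw [schemeDefect, sub_sub, sub_eq_zero]

theorem norm_le_of_norm_schemeDefect_le {A : ℕ → E →L[ℝ] E} {e : ℕ → E} {N : ℕ} {h M W : ℝ}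
    (hh : 0 ≤ h) (hM0 : 0 ≤ M) (hW : 0 ≤ W) (hA : ∀ n < N, ‖A n‖ ≤ M)
    (hhM : 2 * (h * (M * ‖G‖)) ≤ 1) (he0 : e 0 = 0)
    (hdefect : ∀ n < N, ‖schemeDefect G (A n) h (e n) (e (n + 1))‖ ≤ h * W) :
    ∀ n ≤ N, ‖e n‖ ≤ n * (2 * (h * W)) * exp (n * (4 * (h * (M * ‖G‖)))) := by
  refine discrete_gronwall_of_lt (u := fun n => ‖e n‖) (by positivity) (by positivity)
    (by simp [he0]) (fun _ => norm_nonneg _)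
    fun n hn => implicit_step_bound (by positivity) hhM (norm_nonneg _) (by positivity) ?_
  have hincr :
      ‖h • A n (G (e (n + 1), e n))‖ ≤ h * (M * ‖G‖) * (‖e (n + 1)‖ + ‖e n‖) := by
    rw [norm_smul, Real.norm_of_nonneg hh, mul_assoc, mul_assoc]
    gcongr
    calc ‖A n (G (e (n + 1), e n))‖ ≤ ‖A n‖ * ‖G (e (n + 1), e n)‖ := (A n).le_opNorm _
      _ ≤ M * (‖G‖ * (‖e (n + 1)‖ + ‖e n‖)) := by
          gcongr
          exacts [hA n hn, G.norm_apply_prod_le _ _]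
  have hsplit : e (n + 1) = e n + h • A n (G (e (n + 1), e n))
      + schemeDefect G (A n) h (e n) (e (n + 1)) := by
    rw [schemeDefect]; abel
  calc ‖e (n + 1)‖ = ‖e n + h • A n (G (e (n + 1), e n))
        + schemeDefect G (A n) h (e n) (e (n + 1))‖ := congrArg norm hsplit
    _ ≤ ‖e n‖ + ‖h • A n (G (e (n + 1), e n))‖
        + ‖schemeDefect G (A n) h (e n) (e (n + 1))‖ := norm_add₃_le
    _ ≤ ‖e n‖ + h * (M * ‖G‖) * (‖e (n + 1)‖ + ‖e n‖) + h * W :=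
        add_le_add (add_le_add le_rfl hincr) (hdefect n hn)

variable {X : Type*} [PseudoMetricSpace X] {S : Set X} {t₀ T₀ : ℝ} {A : X → ℝ → E →L[ℝ] E}
  {z : X → ℝ → E}

theorem exists_forall_norm_schemeDefect_le (hS : IsCompact S)
    (hA : ContinuousOn (fun p : X × ℝ => A p.1 p.2) (S ×ˢ Icc t₀ T₀))
    (hz : ContinuousOn (fun p : X × ℝ => z p.1 p.2) (S ×ˢ Icc t₀ T₀))
    (hderiv : ∀ s ∈ S, ∀ t ∈ Icc t₀ T₀, HasDerivAt (z s) (A s t (z s t)) t)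
    (hG : ∀ v, G (v, v) = v) {W : ℝ} (hW : 0 < W) :
    ∃ δ > 0, ∀ s ∈ S, ∀ a b, t₀ ≤ a → a ≤ b → b ≤ T₀ → b - a < δ →
      ‖schemeDefect G (A s a) (b - a) (z s a) (z s b)‖ ≤ (b - a) * W := by
  have hK : IsCompact (S ×ˢ Icc t₀ T₀) := hS.prod isCompact_Icc
  obtain ⟨C, hC⟩ := hK.exists_bound_of_continuousOn hA
  set L := max C 0 * ‖G‖
  obtain ⟨δ₁, hδ₁, hF⟩ :=
    hK.exists_forall_dist_lt_of_abs_sub_lt (hA.clm_apply hz) (half_pos hW)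
  obtain ⟨δ₂, hδ₂, hzδ⟩ := hK.exists_forall_dist_lt_of_abs_sub_lt hz
    (ε := W / (2 * (L + 1))) (by positivity)
  refine ⟨min δ₁ δ₂, lt_min hδ₁ hδ₂, fun s hs a b ha hab hb hδ => ?_⟩
  have hsub : Icc a b ⊆ Icc t₀ T₀ := Icc_subset_Icc ha hb
  have haK : (s, a) ∈ S ×ˢ Icc t₀ T₀ := ⟨hs, hsub (left_mem_Icc.2 hab)⟩
  set v := A s a (G (z s b, z s a))
  have hv_close : ‖A s a (z s a) - v‖ ≤ W / 2 := by
    have hzab : ‖z s a - z s b‖ < W / (2 * (L + 1)) := by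
      rw [← dist_eq_norm]
      refine hzδ s a b haK ⟨hs, hsub (right_mem_Icc.2 hab)⟩ ?_
      rw [abs_sub_comm, abs_of_nonneg (sub_nonneg.2 hab)]
      exact hδ.trans_le (min_le_right _ _)
    have hAa : ‖A s a‖ ≤ max C 0 := (hC _ haK).trans (le_max_left _ _)
    calc ‖A s a (z s a) - v‖ = ‖A s a (G (z s a - z s b, 0))‖ := by
          rw [← map_sub]
          nth_rewrite 1 [← hG (z s a)]
          rw [← map_sub, Prod.mk_sub_mk, sub_self]
      _ ≤ max C 0 * (‖G‖ * (‖z s a - z s b‖ + ‖(0 : E)‖)) :=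
          (A s a).le_of_opNorm_le hAa _ |>.trans (by gcongr; exact G.norm_apply_prod_le _ _)
      _ = L * ‖z s a - z s b‖ := by rw [norm_zero, add_zero]; ring
      _ ≤ L * (W / (2 * (L + 1))) := by gcongr
      _ ≤ W / 2 := by
          rw [mul_div_assoc', div_le_div_iff₀ (by positivity) two_pos]
          nlinarith
  have hderiv_close : ∀ x ∈ Ico a b, ‖A s x (z s x) - v‖ ≤ W := by
    intro x hx
    have hxa : dist (A s x (z s x)) (A s a (z s a)) < W / 2 := by
      refine hF s x a ⟨hs, hsub (Ico_subset_Icc_self hx)⟩ haK ?_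
      rw [abs_of_nonneg (sub_nonneg.2 hx.1)]
      linarith [hx.2, min_le_left δ₁ δ₂]
    rw [dist_eq_norm] at hxa
    linarith [norm_sub_le_norm_sub_add_norm_sub (A s x (z s x)) (A s a (z s a)) v]
  have hmvt := norm_image_sub_le_of_norm_deriv_le_segment'
    (f := fun x => z s x - (x - a) • v) (f' := fun x => A s x (z s x) - v)
    (fun x hx => by
      have hd := (hderiv s hs x (hsub hx)).sub (((hasDerivAt_id' x).sub_const a).smul_const v)
      rw [one_smul] at hd
      exact hd.hasDerivWithinAt)
    hderiv_close b (right_mem_Icc.2 hab)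
  simpa only [schemeDefect, sub_self, zero_smul, sub_zero, sub_right_comm _ (z s a),
    mul_comm W] using hmvt

theorem exists_forall_norm_sub_le_of_semiImplicit (hT : t₀ < T₀) (hS : IsCompact S)
    (hA : ContinuousOn (fun p : X × ℝ => A p.1 p.2) (S ×ˢ Icc t₀ T₀))
    (hz : ContinuousOn (fun p : X × ℝ => z p.1 p.2) (S ×ˢ Icc t₀ T₀))
    (hderiv : ∀ s ∈ S, ∀ t ∈ Icc t₀ T₀, HasDerivAt (z s) (A s t (z s t)) t)
    (hG : ∀ v, G (v, v) = v) :
    ∀ ε > 0, ∃ N₀ : ℕ, ∀ N ≥ N₀, ∀ s ∈ S, ∀ zs : ℕ → E, zs 0 = z s t₀ →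
      (∀ n < N, zs (n + 1) = zs n + ((T₀ - t₀) / N) •
        A s (t₀ + n * ((T₀ - t₀) / N)) (G (zs (n + 1), zs n))) →
      ∀ n ≤ N, ‖z s (t₀ + n * ((T₀ - t₀) / N)) - zs n‖ ≤ ε := by
  intro ε hε
  obtain ⟨C, hC⟩ := (hS.prod isCompact_Icc).exists_bound_of_continuousOn hA
  set Δ := T₀ - t₀
  have hΔ : 0 < Δ := sub_pos.2 hT
  set L := max C 0 * ‖G‖
  -- `W` is the consistency tolerance for which the Gronwall bound below comes out as exactly `ε`.
  set W := ε / (2 * Δ * exp (4 * Δ * L)) with hW_def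
  obtain ⟨δ, hδ, hcons⟩ := exists_forall_norm_schemeDefect_le G hS hA hz hderiv hG
    (W := W) (by positivity)
  obtain ⟨N₀, hN₀⟩ := exists_nat_forall_div_lt Δ (d := min δ (1 / (2 * L + 1))) (by positivity)
  refine ⟨N₀, fun N hN s hs zs hzs0 hzs => ?_⟩
  obtain ⟨hNpos, hhd⟩ := hN₀ N hN
  set h := Δ / N
  have hh : 0 < h := div_pos hΔ hNpos
  have hhN : N * h = Δ := mul_div_cancel₀ Δ hNpos.ne'
  have hspacing : ∀ n : ℕ, t₀ + ((n + 1 : ℕ) : ℝ) * h - (t₀ + n * h) = h := by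
    intro n; push_cast; ring
  have hgrid : ∀ n ≤ N, t₀ + n * h ∈ Icc t₀ T₀ := fun n hn => add_nat_mul_div_mem_Icc hT.le hn
  have herr := norm_le_of_norm_schemeDefect_le G (A := fun n => A s (t₀ + n * h))
    (e := fun n => z s (t₀ + n * h) - zs n) (h := h) (M := max C 0) (W := W) hh.le
    (le_max_right _ _) (by positivity)
    (fun n hn => (hC (s, t₀ + n * h) ⟨hs, hgrid n hn.le⟩).trans (le_max_left _ _)) ?_
    (by simp [hzs0]) ?_
  · intro n hn
    calc ‖z s (t₀ + n * h) - zs n‖ ≤ n * (2 * (h * W)) * exp (n * (4 * (h * L))) := herr n hn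
      _ ≤ N * (2 * (h * W)) * exp (N * (4 * (h * L))) := by gcongr
      _ = 2 * (N * h) * W * exp (4 * (N * h) * L) := by ring_nf
      _ = ε := by rw [hhN, hW_def]; field_simp
  · have : h * (2 * L + 1) < 1 := by
      rw [← lt_div_iff₀ (by positivity)]; exact hhd.trans_le (min_le_right _ _)
    nlinarith
  · intro n hn
    rw [← schemeDefect_sub, (schemeDefect_eq_zero_iff G _ _ _ _).2 (hzs n hn), sub_zero]
    have hcons_n := hcons s hs _ _ (hgrid n hn.le).1 (by linarith [hspacing n])
      (hgrid (n + 1) hn).2 (by rw [hspacing n]; exact hhd.trans_le (min_le_left _ _))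
    rwa [hspacing n] at hcons_n

end SemiImplicitEuler

theorem Matrix.continuous_toEuclideanCLM {𝕜 n : Type*} [RCLike 𝕜] [Fintype n] [DecidableEq n] :
    Continuous (toEuclideanCLM (𝕜 := 𝕜) (n := n)) :=
  LinearMap.continuous_of_finiteDimensional
    (toEuclideanCLM (𝕜 := 𝕜) (n := n)).toAlgEquiv.toLinearMap

noncomputable def glueCLM {m : ℕ} :
    (EuclideanSpace ℂ (Fin m ⊕ Fin m) × EuclideanSpace ℂ (Fin m ⊕ Fin m)) →L[ℝ]
      EuclideanSpace ℂ (Fin m ⊕ Fin m) :=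
  LinearMap.toContinuousLinearMap
    { toFun := fun p => glue p.1 p.2
      map_add' := fun _ _ => by ext i; cases i <;> rfl
      map_smul' := fun _ _ => by ext i; cases i <;> rfl }

theorem glueCLM_self {m : ℕ} (v : EuclideanSpace ℂ (Fin m ⊕ Fin m)) : glueCLM (v, v) = v := by
  ext i; cases i <;> rfl

theorem stmt13_general (m : ℕ) (t₀ T₀ : ℝ) (hT : t₀ < T₀)
    (B : ℝ → ℝ → Matrix (Fin m ⊕ Fin m) (Fin m ⊕ Fin m) ℝ)
    (hBcont : ContinuousOn (fun p : ℝ × ℝ => B p.1 p.2)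
      (Set.Icc (0 : ℝ) 1 ×ˢ Set.Icc t₀ T₀))
    (z : ℝ → ℝ → EuclideanSpace ℂ (Fin m ⊕ Fin m))
    (hzcont : ContinuousOn (fun p : ℝ × ℝ => z p.1 p.2)
      (Set.Icc (0 : ℝ) 1 ×ˢ Set.Icc t₀ T₀))
    (hz : ∀ s ∈ Set.Icc (0 : ℝ) 1, ∀ t ∈ Set.Icc t₀ T₀,
      HasDerivAt (z s) (mvE (Jm m * (B s t).map (fun a => (a : ℂ))) (z s t)) t) :
    ∀ ε > (0 : ℝ), ∃ N₀ : ℕ, ∀ N : ℕ, N₀ ≤ N → 1 ≤ N →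
      ∀ s ∈ Set.Icc (0 : ℝ) 1,
        ∀ zs : ℕ → EuclideanSpace ℂ (Fin m ⊕ Fin m),
          zs 0 = z s t₀ →
          (∀ n : ℕ, n < N →
            zs (n + 1) = zs n + (((T₀ - t₀) / N : ℝ) : ℂ) •
              mvE (Jm m * (B s (t₀ + (n : ℝ) * ((T₀ - t₀) / N))).map (fun a => (a : ℂ)))
                (glue (zs (n + 1)) (zs n))) →
          ∀ n : ℕ, n ≤ N → ‖z s (t₀ + (n : ℝ) * ((T₀ - t₀) / N)) - zs n‖ ≤ ε := by
  set A : ℝ → ℝ → EuclideanSpace ℂ (Fin m ⊕ Fin m) →L[ℝ] EuclideanSpace ℂ (Fin m ⊕ Fin m) :=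
    fun s t =>
      (toEuclideanCLM (𝕜 := ℂ) (Jm m * (B s t).map (fun a => (a : ℂ)))).restrictScalars ℝ
  have hA : ContinuousOn (fun p : ℝ × ℝ => A p.1 p.2) (Icc 0 1 ×ˢ Icc t₀ T₀) :=
    (ContinuousLinearMap.restrictScalarsL ℂ _ _ ℝ ℝ).continuous.comp_continuousOn
      (Matrix.continuous_toEuclideanCLM.comp_continuousOn
        ((continuous_const.matrix_mul
          (continuous_id.matrix_map Complex.continuous_ofReal)).comp_continuousOn hBcont))
  intro ε hε
  obtain ⟨N₀, hN₀⟩ := exists_forall_norm_sub_le_of_semiImplicit glueCLM hT isCompact_Icc hA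
    hzcont hz glueCLM_self ε hε
  refine ⟨N₀, fun N hN _ s hs zs hzs0 hzs => hN₀ N hN s hs zs hzs0 fun n hn => ?_⟩
  exact (hzs n hn).trans (by rw [Complex.coe_smul]; rfl)

/-- error estimate, uniform in the parameter `s ∈ [0,1]`, for the
semi-implicit Euler scheme applied to the linear Hamiltonian systems
`z_s' = J B(s,t) z_s` with continuous symmetric coefficients. -/
theorem stmt13 (m : ℕ) (hm : 1 ≤ m) (t₀ T₀ : ℝ) (hT : t₀ < T₀)
    (B : ℝ → ℝ → Matrix (Fin m ⊕ Fin m) (Fin m ⊕ Fin m) ℝ)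
    (hBsym : ∀ s ∈ Set.Icc (0 : ℝ) 1, ∀ t ∈ Set.Icc t₀ T₀, (B s t)ᵀ = B s t)
    (hBcont : ContinuousOn (fun p : ℝ × ℝ => B p.1 p.2)
      (Set.Icc (0 : ℝ) 1 ×ˢ Set.Icc t₀ T₀))
    (z : ℝ → ℝ → EuclideanSpace ℂ (Fin m ⊕ Fin m))
    (hzcont : ContinuousOn (fun p : ℝ × ℝ => z p.1 p.2)
      (Set.Icc (0 : ℝ) 1 ×ˢ Set.Icc t₀ T₀))
    (hz : ∀ s ∈ Set.Icc (0 : ℝ) 1, ∀ t ∈ Set.Icc t₀ T₀,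
      HasDerivAt (z s) (mvE (Jm m * (B s t).map (fun a => (a : ℂ))) (z s t)) t) :
    ∀ ε > (0 : ℝ), ∃ N₀ : ℕ, ∀ N : ℕ, N₀ ≤ N → 1 ≤ N →
      ∀ s ∈ Set.Icc (0 : ℝ) 1,
        ∀ zs : ℕ → EuclideanSpace ℂ (Fin m ⊕ Fin m),
          zs 0 = z s t₀ →
          (∀ n : ℕ, n < N →
            zs (n + 1) = zs n + (((T₀ - t₀) / N : ℝ) : ℂ) •
              mvE (Jm m * (B s (t₀ + (n : ℝ) * ((T₀ - t₀) / N))).map (fun a => (a : ℂ)))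
                (glue (zs (n + 1)) (zs n))) →
          ∀ n : ℕ, n ≤ N → ‖z s (t₀ + (n : ℝ) * ((T₀ - t₀) / N)) - zs n‖ ≤ ε :=
  stmt13_general m t₀ T₀ hT B hBcont z hzcont hz
end
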